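/- arXiv:1711.05628 — 4 statements merged into one kernel-verified Lean document; each statement's English description precedes it below -/
import Mathlib

section
/- Let $d\ge1$ and let $a$ be a real-valued polynomial on $\mathbb{R}^{2d}$ of degree $m\ge2$ satisfying the Shubin ellipticity hypotheses with constants $C_1,B_1$. Then for each fixed $n\in\mathbb{Z}_+$ there exist constants $C',B'>0$ such that $\langle w\rangle^{nm}/C'\le a^{(\# n)}(w)\le C'\langle w\rangle^{nm}$ for all $w\in Q_{B'}^{c}$, and $\big|D^{\gamma}\big(a^{(\# n)}(w)-(a(w))^{n}\big)\big|\le C'^{\,|\gamma|+1}\,\langle w\rangle^{nm-|\gamma|-2}$ for all $w\in\mathbb{R}^{2d}$ and all multi-indices $\gamma\in\mathbb{N}^{2d}$. -/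
open scoped BigOperators

noncomputable section

/-- Japanese bracket `⟨w⟩ = (1+|w|²)^{1/2}`. -/
def jap {ι : Type*} [Fintype ι] (w : EuclideanSpace ℝ ι) : ℝ :=
  Real.sqrt (1 + ‖w‖ ^ 2)

/-- `|α|` for a multi-index. -/
def mdeg {ι : Type*} [Fintype ι] (α : ι → ℕ) : ℕ := ∑ i, α i

/-- `α!` for a multi-index. -/
def mfact {ι : Type*} [Fintype ι] (α : ι → ℕ) : ℕ := ∏ i, Nat.factorial (α i)

/-- Partial derivative in the `i`-th coordinate direction. -/
def pd {ι : Type*} [Fintype ι] [DecidableEq ι] {F : Type*} [NormedAddCommGroup F]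
    [NormedSpace ℝ F] (i : ι) (f : EuclideanSpace ℝ ι → F) : EuclideanSpace ℝ ι → F :=
  fun x => fderiv ℝ f x (EuclideanSpace.single i 1)

/-- Iterated partial derivative along a list of directions. -/
def listDeriv {ι : Type*} [Fintype ι] [DecidableEq ι] {F : Type*} [NormedAddCommGroup F]
    [NormedSpace ℝ F] : List ι → (EuclideanSpace ℝ ι → F) → EuclideanSpace ℝ ι → F
  | [], f => f
  | i :: l, f => pd i (listDeriv l f)

/-- Multi-index partial derivative `∂^α`. -/
def mderiv {ι : Type*} [Fintype ι] [DecidableEq ι] {F : Type*} [NormedAddCommGroup F]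
    [NormedSpace ℝ F] (α : ι → ℕ) (f : EuclideanSpace ℝ ι → F) : EuclideanSpace ℝ ι → F :=
  listDeriv (Finset.univ.toList.flatMap fun i => List.replicate (α i) i) f

/-- `D^α = i^{-|α|} ∂^α`. -/
def Dm {ι : Type*} [Fintype ι] [DecidableEq ι] {F : Type*} [NormedAddCommGroup F]
    [NormedSpace ℂ F] (α : ι → ℕ) (f : EuclideanSpace ℝ ι → F) : EuclideanSpace ℝ ι → F :=
  fun w => ((-Complex.I) ^ mdeg α) • mderiv α f w

/-- `⟨x⟩` for the `x`-part of a phase-space point `w = (x, ξ)`. -/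
def japX {d : ℕ} (w : EuclideanSpace ℝ (Fin d ⊕ Fin d)) : ℝ :=
  Real.sqrt (1 + ∑ i : Fin d, (w (Sum.inl i)) ^ 2)

/-- `⟨ξ⟩` for the `ξ`-part of a phase-space point `w = (x, ξ)`. -/
def japXi {d : ℕ} (w : EuclideanSpace ℝ (Fin d ⊕ Fin d)) : ℝ :=
  Real.sqrt (1 + ∑ i : Fin d, (w (Sum.inr i)) ^ 2)

/-- The set `Q_B`. -/
def QQ (d : ℕ) (B : ℝ) : Set (EuclideanSpace ℝ (Fin d ⊕ Fin d)) :=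
  {w | japX w < B ∧ japXi w < B}

/-- `∂_ξ^α D_x^β f`. -/
def pdXxi {d : ℕ} {F : Type*} [NormedAddCommGroup F] [NormedSpace ℂ F]
    (β α : Fin d → ℕ) (f : EuclideanSpace ℝ (Fin d ⊕ Fin d) → F) :
    EuclideanSpace ℝ (Fin d ⊕ Fin d) → F :=
  fun w => ((-Complex.I) ^ mdeg β) • mderiv (Sum.elim β α) f w

/-- `(a^{#(n+1)})_j`  (so `sharpIter a n j = (a^{#(n+1)})_j`). -/
def sharpIter {d : ℕ} (a : EuclideanSpace ℝ (Fin d ⊕ Fin d) → ℂ) :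
    ℕ → ℕ → EuclideanSpace ℝ (Fin d ⊕ Fin d) → ℂ
  | 0, 0 => a
  | 0, _ + 1 => fun _ => 0
  | n + 1, j => fun w =>
      ∑ sl ∈ Finset.HasAntidiagonal.antidiagonal j,
        ∑ p ∈ Finset.HasAntidiagonal.antidiagonal sl.2,
          ∑ α ∈ Finset.Nat.antidiagonalTuple d p.1,
            ∑ β ∈ Finset.Nat.antidiagonalTuple d p.2,
              ((-1 : ℂ) ^ mdeg β / ((mfact α : ℂ) * (mfact β : ℂ) * 2 ^ sl.2)) *
                (pdXxi β α (sharpIter a n sl.1) w * pdXxi α β a w)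

/-- `a^{(#n)} = ∑_j (a^{#n})_j`, with `a^{(#0)} = 1`. -/
def sharpTot {d : ℕ} (a : EuclideanSpace ℝ (Fin d ⊕ Fin d) → ℂ) :
    ℕ → EuclideanSpace ℝ (Fin d ⊕ Fin d) → ℂ
  | 0 => fun _ => 1
  | n + 1 => fun w => ∑' j, sharpIter a n j w

/-- `P(t) = ∑ t^n / M̂_n`. -/
def Pser (Mh : ℕ → ℝ) (t : ℝ) : ℝ := ∑' n, t ^ n / Mh n

/-- The associated function `M(t) = sup_p ln₊ (t^p / M_p)`. -/
def assocFn (M : ℕ → ℝ) (t : ℝ) : ℝ := ⨆ p : ℕ, max (Real.log (t ^ p / M p)) 0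

/-!
For a polynomial symbol every term of the iterated sharp product is again a polynomial, and the
`j`-th term of `a^{#n}` has degree at most `nm - 2j`, since each order of the expansion takes two
derivatives. Hence `a^{(#n)} = a^n + R` with `deg R ≤ nm - 2`. The derivatives of a polynomial of
degree `≤ D` satisfy `|∂^γ q| ≤ K ⟨w⟩^{D - |γ|}` with `K` independent of `γ`, which is the second
estimate. Outside `Q_{B₁}` the hypotheses give `a^n ≍ ⟨w⟩^{nm}`, and `|R| ≲ ⟨w⟩^{nm-2}` is absorbed
into `a^n` once `⟨w⟩` is large, which is the first.
-/

open MvPolynomial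

section PolynomialFunctions

variable {ι : Type*}

def polyFn (q : MvPolynomial ι ℂ) (w : EuclideanSpace ℝ ι) : ℂ :=
  eval (fun i => (w i : ℂ)) q

@[simp] lemma polyFn_add (q r : MvPolynomial ι ℂ) : polyFn (q + r) = polyFn q + polyFn r := by
  funext w; simp [polyFn]

@[simp] lemma polyFn_mul (q r : MvPolynomial ι ℂ) : polyFn (q * r) = polyFn q * polyFn r := by
  funext w; simp [polyFn]

@[simp] lemma polyFn_pow (q : MvPolynomial ι ℂ) (n : ℕ) : polyFn (q ^ n) = polyFn q ^ n := by
  funext w; simp [polyFn]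

@[simp] lemma polyFn_smul (c : ℂ) (q : MvPolynomial ι ℂ) : polyFn (c • q) = c • polyFn q := by
  funext w; simp [polyFn]

@[simp] lemma polyFn_zero : polyFn (0 : MvPolynomial ι ℂ) = 0 := by
  funext w; simp [polyFn]

@[simp] lemma polyFn_C (c : ℂ) : polyFn (C c : MvPolynomial ι ℂ) = fun _ => c := by
  funext w; simp [polyFn]

@[simp] lemma polyFn_X (i : ι) : polyFn (X i : MvPolynomial ι ℂ) = fun w => (w i : ℂ) := by
  funext w; simp [polyFn]

lemma polyFn_sum {κ : Type*} (s : Finset κ) (f : κ → MvPolynomial ι ℂ) :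
    polyFn (∑ k ∈ s, f k) = ∑ k ∈ s, polyFn (f k) := by
  funext w; simp [polyFn, map_sum]

lemma ofReal_eval_eq_polyFn_map (p : MvPolynomial ι ℝ) (w : EuclideanSpace ℝ ι) :
    ((eval (fun i => w i) p : ℝ) : ℂ) = polyFn (map (algebraMap ℝ ℂ) p) w := by
  rw [polyFn, eval_map, ← Complex.coe_algebraMap]
  exact eval₂_comp_left _ (RingHom.id ℝ) _ p

def pderivList : List ι → MvPolynomial ι ℂ → MvPolynomial ι ℂ
  | [], q => q
  | i :: l, q => pderiv i (pderivList l q)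

variable [Fintype ι]

def mpderiv (γ : ι → ℕ) (q : MvPolynomial ι ℂ) : MvPolynomial ι ℂ :=
  pderivList (Finset.univ.toList.flatMap fun i => List.replicate (γ i) i) q

lemma mpderiv_zero (q : MvPolynomial ι ℂ) : mpderiv 0 q = q := by
  simp [mpderiv, List.flatMap_eq_nil_iff.2, pderivList]

variable [DecidableEq ι]

lemma hasFDerivAt_polyFn (q : MvPolynomial ι ℂ) (w : EuclideanSpace ℝ ι) :
    HasFDerivAt (polyFn q)
      (∑ i, polyFn (pderiv i q) w • (Complex.ofRealCLM ∘L EuclideanSpace.proj i)) w := by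
  induction q using MvPolynomial.induction_on with
  | C c =>
    rw [polyFn_C]
    refine (hasFDerivAt_const c w).congr_fderiv ?_
    ext v
    simp
  | add q r hq hr =>
    rw [polyFn_add]
    refine (hq.add hr).congr_fderiv ?_
    ext v
    simp [add_mul, Finset.sum_add_distrib]
  | mul_X q j hq =>
    have hX : HasFDerivAt (fun v : EuclideanSpace ℝ ι => (v j : ℂ))
        (Complex.ofRealCLM ∘L EuclideanSpace.proj j) w :=
      (Complex.ofRealCLM ∘L EuclideanSpace.proj j).hasFDerivAt
    rw [polyFn_mul, polyFn_X]
    refine (hq.mul hX).congr_fderiv ?_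
    ext v
    simp [Pi.single_apply, apply_ite polyFn, ite_apply, add_mul, Finset.sum_add_distrib,
      Finset.mul_sum, mul_assoc]

lemma pd_polyFn (i : ι) (q : MvPolynomial ι ℂ) : pd i (polyFn q) = polyFn (pderiv i q) := by
  funext w
  simp [pd, (hasFDerivAt_polyFn q w).fderiv, apply_ite Complex.ofReal]

lemma listDeriv_polyFn (l : List ι) (q : MvPolynomial ι ℂ) :
    listDeriv l (polyFn q) = polyFn (pderivList l q) := by
  induction l with
  | nil => rfl
  | cons i l ih => rw [listDeriv, ih, pd_polyFn, pderivList]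

lemma mderiv_polyFn (γ : ι → ℕ) (q : MvPolynomial ι ℂ) :
    mderiv γ (polyFn q) = polyFn (mpderiv γ q) :=
  listDeriv_polyFn _ q

lemma mderiv_zero {F : Type*} [NormedAddCommGroup F] [NormedSpace ℝ F]
    (f : EuclideanSpace ℝ ι → F) : mderiv 0 f = f := by
  simp [mderiv, List.flatMap_eq_nil_iff.2, listDeriv]

lemma norm_Dm {F : Type*} [NormedAddCommGroup F] [NormedSpace ℂ F] (γ : ι → ℕ)
    (f : EuclideanSpace ℝ ι → F) (w : EuclideanSpace ℝ ι) : ‖Dm γ f w‖ = ‖mderiv γ f w‖ := by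
  simp [Dm, norm_smul]

end PolynomialFunctions

section TotalDegreeLE

variable {σ R : Type*} [CommSemiring R]

/-- The bound is real so that it may be negative, which forces `q = 0`. -/
def TotalDegreeLE (q : MvPolynomial σ R) (D : ℝ) : Prop :=
  ∀ s ∈ q.support, (s.degree : ℝ) ≤ D

namespace TotalDegreeLE

variable {q r : MvPolynomial σ R} {D E : ℝ}

lemma zero : TotalDegreeLE (0 : MvPolynomial σ R) D := by
  simp [TotalDegreeLE]

lemma mono (h : TotalDegreeLE q D) (hDE : D ≤ E) : TotalDegreeLE q E :=
  fun s hs => (h s hs).trans hDE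

lemma eq_zero_of_neg (h : TotalDegreeLE q D) (hD : D < 0) : q = 0 := by
  by_contra hq
  obtain ⟨s, hs⟩ := support_nonempty.2 hq
  linarith [h s hs, (s.degree.cast_nonneg : (0 : ℝ) ≤ s.degree)]

lemma of_totalDegree_le {m : ℕ} (h : q.totalDegree ≤ m) : TotalDegreeLE q m := fun s hs => by
  exact_mod_cast (le_totalDegree hs).trans h

lemma add (hq : TotalDegreeLE q D) (hr : TotalDegreeLE r D) : TotalDegreeLE (q + r) D := by
  classical
  intro s hs
  rcases Finset.mem_union.1 (support_add hs) with h | h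
  exacts [hq s h, hr s h]

lemma smul (c : R) (hq : TotalDegreeLE q D) : TotalDegreeLE (c • q) D :=
  fun s hs => hq s (support_smul hs)

lemma mul (hq : TotalDegreeLE q D) (hr : TotalDegreeLE r E) : TotalDegreeLE (q * r) (D + E) := by
  classical
  intro s hs
  obtain ⟨s₁, hs₁, s₂, hs₂, rfl⟩ := Finset.mem_add.1 (support_mul q r hs)
  push_cast [map_add]
  linarith [hq s₁ hs₁, hr s₂ hs₂]

lemma pderiv (i : σ) (hq : TotalDegreeLE q D) :
    TotalDegreeLE (MvPolynomial.pderiv i q) (D - 1) := by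
  classical
  intro s hs
  have hs' : s + Finsupp.single i 1 ∈ q.support := by
    rw [mem_support_iff, coeff_pderiv] at hs
    exact mem_support_iff.2 (left_ne_zero_of_mul hs)
  have := hq _ hs'
  push_cast [map_add, Finsupp.degree_single] at this
  linarith

lemma map {S : Type*} [CommSemiring S] (f : R →+* S) (hq : TotalDegreeLE q D) :
    TotalDegreeLE (map f q) D :=
  fun s hs => hq s (support_map_subset f q hs)

end TotalDegreeLE

lemma totalDegreeLE_sum {κ : Type*} {s : Finset κ} {f : κ → MvPolynomial σ R} {D : ℝ}
    (h : ∀ k ∈ s, TotalDegreeLE (f k) D) : TotalDegreeLE (∑ k ∈ s, f k) D := by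
  classical
  induction s using Finset.induction_on with
  | empty => exact TotalDegreeLE.zero
  | insert k s hk ih =>
    rw [Finset.sum_insert hk]
    exact (h k (Finset.mem_insert_self k s)).add
      (ih fun j hj => h j (Finset.mem_insert_of_mem hj))

end TotalDegreeLE

section Bounds

variable {ι : Type*}

lemma TotalDegreeLE.pderivList {q : MvPolynomial ι ℂ} {D : ℝ} (l : List ι)
    (hq : TotalDegreeLE q D) : TotalDegreeLE (pderivList l q) (D - l.length) := by
  induction l with
  | nil => simpa [_root_.pderivList] using hq
  | cons i l ih => exact (ih.pderiv i).mono (by push_cast [List.length_cons]; linarith)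

def coeffNormSum (q : MvPolynomial ι ℂ) : ℝ :=
  ∑ s ∈ q.support, ‖q.coeff s‖

lemma coeffNormSum_nonneg (q : MvPolynomial ι ℂ) : 0 ≤ coeffNormSum q :=
  Finset.sum_nonneg fun _ _ => norm_nonneg _

variable [Fintype ι]

lemma TotalDegreeLE.mpderiv {q : MvPolynomial ι ℂ} {D : ℝ} (γ : ι → ℕ)
    (hq : TotalDegreeLE q D) : TotalDegreeLE (mpderiv γ q) (D - mdeg γ) := by
  have := hq.pderivList (Finset.univ.toList.flatMap fun i => List.replicate (γ i) i)
  simpa [mdeg, Finset.sum_map_toList, _root_.mpderiv] using this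

lemma one_le_jap (w : EuclideanSpace ℝ ι) : 1 ≤ jap w :=
  Real.one_le_sqrt.2 (by nlinarith [sq_nonneg ‖w‖])

lemma jap_pos (w : EuclideanSpace ℝ ι) : 0 < jap w :=
  zero_lt_one.trans_le (one_le_jap w)

lemma abs_apply_le_jap (w : EuclideanSpace ℝ ι) (i : ι) : |w i| ≤ jap w :=
  (PiLp.norm_apply_le w i).trans (Real.le_sqrt_of_sq_le (by linarith [sq_nonneg ‖w‖]))

lemma norm_polyFn_le {q : MvPolynomial ι ℂ} {D : ℝ} (hq : TotalDegreeLE q D)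
    (w : EuclideanSpace ℝ ι) : ‖polyFn q w‖ ≤ coeffNormSum q * jap w ^ D := by
  rw [polyFn, eval_eq, coeffNormSum, Finset.sum_mul]
  refine (norm_sum_le _ _).trans (Finset.sum_le_sum fun s hs => ?_)
  rw [norm_mul]
  gcongr
  calc ‖∏ i ∈ s.support, ((w i : ℂ)) ^ s i‖ = ∏ i ∈ s.support, |w i| ^ s i := by
        simp [norm_prod]
    _ ≤ ∏ i ∈ s.support, jap w ^ s i :=
        Finset.prod_le_prod (fun _ _ => by positivity)
          fun i _ => pow_le_pow_left₀ (abs_nonneg _) (abs_apply_le_jap w i) _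
    _ = jap w ^ (s.degree : ℝ) := by
        rw [Finset.prod_pow_eq_pow_sum, Real.rpow_natCast, Finsupp.degree_apply]
    _ ≤ jap w ^ D := Real.rpow_le_rpow_of_exponent_le (one_le_jap w) (hq s hs)

variable [DecidableEq ι]

/-- Only the finitely many `γ` with `|γ| ≤ D` matter, the other derivatives vanish. -/
lemma exists_norm_mderiv_polyFn_le {q : MvPolynomial ι ℂ} {D : ℝ} (hq : TotalDegreeLE q D) :
    ∃ K, 0 ≤ K ∧ ∀ (γ : ι → ℕ) w,
      ‖mderiv γ (polyFn q) w‖ ≤ K * jap w ^ (D - mdeg γ) := by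
  let box := Fintype.piFinset fun _ : ι => Finset.range (⌊D⌋₊ + 1)
  have hK : 0 ≤ ∑ γ ∈ box, coeffNormSum (mpderiv γ q) :=
    Finset.sum_nonneg fun _ _ => coeffNormSum_nonneg _
  refine ⟨_, hK, fun γ w => ?_⟩
  have hjap := Real.rpow_nonneg (jap_pos w).le (D - mdeg γ)
  rw [mderiv_polyFn]
  by_cases hγ : D - mdeg γ < 0
  · rw [(hq.mpderiv γ).eq_zero_of_neg hγ, polyFn_zero, Pi.zero_apply, norm_zero]
    exact mul_nonneg hK hjap
  have hmem : γ ∈ box := Fintype.mem_piFinset.2 fun i => by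
    have : γ i ≤ mdeg γ := Finset.single_le_sum (fun _ _ => Nat.zero_le _) (Finset.mem_univ i)
    have : mdeg γ ≤ ⌊D⌋₊ := Nat.le_floor (by linarith)
    exact Finset.mem_range.2 (by omega)
  refine (norm_polyFn_le (hq.mpderiv γ) w).trans (mul_le_mul_of_nonneg_right ?_ hjap)
  exact Finset.single_le_sum (f := fun γ => coeffNormSum (mpderiv γ q))
    (fun _ _ => coeffNormSum_nonneg _) hmem

end Bounds

section SharpProduct

variable {d : ℕ}

def polyXxi (β α : Fin d → ℕ) (q : MvPolynomial (Fin d ⊕ Fin d) ℂ) :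
    MvPolynomial (Fin d ⊕ Fin d) ℂ :=
  (-Complex.I) ^ mdeg β • mpderiv (Sum.elim β α) q

lemma polyFn_polyXxi (β α : Fin d → ℕ) (q : MvPolynomial (Fin d ⊕ Fin d) ℂ) :
    polyFn (polyXxi β α q) = pdXxi β α (polyFn q) := by
  funext w
  simp [polyXxi, pdXxi, mderiv_polyFn]

def sharpIterPoly (pc : MvPolynomial (Fin d ⊕ Fin d) ℂ) :
    ℕ → ℕ → MvPolynomial (Fin d ⊕ Fin d) ℂ
  | 0, 0 => pc
  | 0, _ + 1 => 0
  | n + 1, j =>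
      ∑ sl ∈ Finset.HasAntidiagonal.antidiagonal j,
        ∑ p ∈ Finset.HasAntidiagonal.antidiagonal sl.2,
          ∑ α ∈ Finset.Nat.antidiagonalTuple d p.1,
            ∑ β ∈ Finset.Nat.antidiagonalTuple d p.2,
              ((-1 : ℂ) ^ mdeg β / ((mfact α : ℂ) * (mfact β : ℂ) * 2 ^ sl.2)) •
                (polyXxi β α (sharpIterPoly pc n sl.1) * polyXxi α β pc)

lemma sharpIter_polyFn (pc : MvPolynomial (Fin d ⊕ Fin d) ℂ) (n j : ℕ) :
    sharpIter (polyFn pc) n j = polyFn (sharpIterPoly pc n j) := by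
  induction n generalizing j with
  | zero => cases j <;> simp [sharpIter, sharpIterPoly, Pi.zero_def]
  | succ n ih =>
    funext w
    simp [sharpIter, sharpIterPoly, polyFn_sum, ih, polyFn_polyXxi]

lemma sharpIterPoly_zero_right (pc : MvPolynomial (Fin d ⊕ Fin d) ℂ) (n : ℕ) :
    sharpIterPoly pc n 0 = pc ^ (n + 1) := by
  induction n with
  | zero => simp [sharpIterPoly]
  | succ n ih =>
    simp [sharpIterPoly, ih, polyXxi, mdeg, mfact, mpderiv_zero, pow_succ,
      Finset.Nat.antidiagonalTuple_zero_right]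

variable {m : ℕ} {pc : MvPolynomial (Fin d ⊕ Fin d) ℂ}

lemma mdeg_sum_elim (β α : Fin d → ℕ) : mdeg (Sum.elim β α) = mdeg β + mdeg α := by
  simp [mdeg, Fintype.sum_sum_type]

lemma TotalDegreeLE.polyXxi {q : MvPolynomial (Fin d ⊕ Fin d) ℂ} {D : ℝ} (β α : Fin d → ℕ)
    (hq : TotalDegreeLE q D) : TotalDegreeLE (polyXxi β α q) (D - (mdeg β + mdeg α)) := by
  simpa [mdeg_sum_elim, _root_.polyXxi] using
    (hq.mpderiv (Sum.elim β α)).smul ((-Complex.I) ^ mdeg β)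

lemma TotalDegreeLE.sharpIterPoly (hpc : TotalDegreeLE pc m) (n j : ℕ) :
    TotalDegreeLE (sharpIterPoly pc n j) ((n + 1) * m - 2 * j) := by
  induction n generalizing j with
  | zero =>
    cases j with
    | zero => simpa [_root_.sharpIterPoly] using hpc
    | succ j => exact TotalDegreeLE.zero
  | succ n ih =>
    refine totalDegreeLE_sum fun sl hsl => totalDegreeLE_sum fun p hp =>
      totalDegreeLE_sum fun α hα => totalDegreeLE_sum fun β hβ => ?_
    rw [Finset.HasAntidiagonal.mem_antidiagonal] at hsl hp
    rw [Finset.Nat.mem_antidiagonalTuple] at hα hβ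
    refine (((ih sl.1).polyXxi β α).mul (hpc.polyXxi α β)).smul _ |>.mono (le_of_eq ?_)
    simp only [mdeg, hα, hβ]
    rw [← hsl, ← hp]
    push_cast
    ring

/-- The cutoff is harmless: the terms with `2 j > (n + 1) m` vanish for degree reasons. -/
def sharpRemainder (pc : MvPolynomial (Fin d ⊕ Fin d) ℂ) (m n : ℕ) :
    MvPolynomial (Fin d ⊕ Fin d) ℂ :=
  ∑ j ∈ Finset.range ((n + 1) * m), sharpIterPoly pc n (j + 1)

lemma TotalDegreeLE.sharpRemainder (hpc : TotalDegreeLE pc m) (n : ℕ) :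
    TotalDegreeLE (sharpRemainder pc m n) ((n + 1) * m - 2) :=
  totalDegreeLE_sum fun j _ => (hpc.sharpIterPoly n (j + 1)).mono (by push_cast; linarith)

lemma sharpTot_polyFn (hpc : TotalDegreeLE pc m) (n : ℕ) :
    sharpTot (polyFn pc) (n + 1) = polyFn pc ^ (n + 1) + polyFn (sharpRemainder pc m n) := by
  funext w
  have hvanish : ∀ j ∉ Finset.range ((n + 1) * m + 1), sharpIter (polyFn pc) n j w = 0 := by
    intro j hj
    rw [Finset.mem_range, not_lt] at hj
    rw [sharpIter_polyFn, (hpc.sharpIterPoly n j).eq_zero_of_neg, polyFn_zero, Pi.zero_apply]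
    have : ((n + 1) * m + 1 : ℝ) ≤ j := by exact_mod_cast hj
    nlinarith [(by positivity : (0 : ℝ) ≤ (n + 1) * m)]
  show ∑' j, sharpIter (polyFn pc) n j w = _
  rw [tsum_eq_sum hvanish, Finset.sum_range_succ']
  simp only [sharpIter_polyFn, sharpIterPoly_zero_right, sharpRemainder, polyFn_sum, polyFn_pow,
    Finset.sum_apply, Pi.add_apply, Pi.pow_apply]
  ring

end SharpProduct

section PhaseSpace

variable {d : ℕ}

lemma japX_le_jap (w : EuclideanSpace ℝ (Fin d ⊕ Fin d)) : japX w ≤ jap w := by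
  refine Real.sqrt_le_sqrt ?_
  rw [EuclideanSpace.real_norm_sq_eq, Fintype.sum_sum_type]
  linarith [Finset.sum_nonneg fun i (_ : i ∈ Finset.univ) => sq_nonneg (w (Sum.inr i))]

lemma japXi_le_jap (w : EuclideanSpace ℝ (Fin d ⊕ Fin d)) : japXi w ≤ jap w := by
  refine Real.sqrt_le_sqrt ?_
  rw [EuclideanSpace.real_norm_sq_eq, Fintype.sum_sum_type]
  linarith [Finset.sum_nonneg fun i (_ : i ∈ Finset.univ) => sq_nonneg (w (Sum.inl i))]

lemma le_jap_of_notMem_QQ {B : ℝ} {w : EuclideanSpace ℝ (Fin d ⊕ Fin d)} (hw : w ∉ QQ d B) :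
    B ≤ jap w := by
  simp only [QQ, Set.mem_ofPred_eq, not_and_or, not_lt] at hw
  rcases hw with h | h
  exacts [h.trans (japX_le_jap w), h.trans (japXi_le_jap w)]

lemma notMem_QQ_of_le {B B' : ℝ} (hBB' : B ≤ B') {w : EuclideanSpace ℝ (Fin d ⊕ Fin d)}
    (hw : w ∉ QQ d B') : w ∉ QQ d B := fun ⟨hx, hξ⟩ =>
  hw ⟨hx.trans_le hBB', hξ.trans_le hBB'⟩

end PhaseSpace

lemma two_sided_bound_of_abs_le {J A E c K : ℝ} {N : ℕ} (hJ : 1 ≤ J) (hc : 0 < c)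
    (hK : 0 ≤ K) (hlow : J ^ N ≤ c * A) (hup : A ≤ c * J ^ N) (hE : |E| * J ^ 2 ≤ K * J ^ N)
    (hJK : 2 * K * c ≤ J ^ 2) :
    J ^ N / (2 * c + K + 1) ≤ A + E ∧ A + E ≤ (2 * c + K + 1) * J ^ N := by
  have hJN : 0 < J ^ N := by positivity
  have hJ2 : 1 ≤ J ^ 2 := one_le_pow₀ hJ
  have hsmall : 2 * c * |E| ≤ J ^ N := by
    have : 2 * c * |E| * J ^ 2 ≤ J ^ N * J ^ 2 := by nlinarith [abs_nonneg E]
    exact le_of_mul_le_mul_right this (by positivity)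
  have hEle : |E| ≤ K * J ^ N := by nlinarith [abs_nonneg E]
  constructor
  · have hmain : J ^ N ≤ 2 * c * (A + E) := by nlinarith [neg_abs_le E]
    have hpos : 0 ≤ A + E := by nlinarith
    rw [div_le_iff₀ (by positivity)]
    nlinarith
  · nlinarith [le_abs_self E]

lemma rpow_sub_two_mul_sq {J : ℝ} (hJ : 0 < J) (N : ℕ) : J ^ ((N : ℝ) - 2) * J ^ 2 = J ^ N := by
  rw [Real.rpow_sub hJ, Real.rpow_natCast, Real.rpow_two, div_mul_cancel₀ _ (by positivity)]

lemma pow_add_re_bounds {J A C₁ K : ℝ} {m n : ℕ} {z : ℂ} (hJ : 1 ≤ J) (hC₁ : 0 < C₁)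
    (hK : 0 ≤ K) (hA : 0 ≤ A) (hlow : J ^ m ≤ C₁ * A) (hup : A ≤ C₁ * J ^ m)
    (hz : ‖z‖ ≤ K * J ^ (((n * m : ℕ) : ℝ) - 2)) (hJK : 2 * K * C₁ ^ n ≤ J ^ 2) :
    J ^ (n * m) / (2 * C₁ ^ n + K + 1) ≤ A ^ n + z.re ∧
      A ^ n + z.re ≤ (2 * C₁ ^ n + K + 1) * J ^ (n * m) := by
  refine two_sided_bound_of_abs_le hJ (by positivity) hK ?_ ?_ ?_ hJK
  · calc J ^ (n * m) = (J ^ m) ^ n := by rw [← pow_mul, mul_comm]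
      _ ≤ (C₁ * A) ^ n := pow_le_pow_left₀ (by positivity) hlow _
      _ = C₁ ^ n * A ^ n := mul_pow _ _ _
  · calc A ^ n ≤ (C₁ * J ^ m) ^ n := pow_le_pow_left₀ hA hup _
      _ = C₁ ^ n * J ^ (n * m) := by rw [mul_pow, ← pow_mul, mul_comm m]
  · calc |z.re| * J ^ 2 ≤ K * J ^ (((n * m : ℕ) : ℝ) - 2) * J ^ 2 := by
          gcongr
          exact (Complex.abs_re_le_norm z).trans hz
      _ = K * J ^ (n * m) := by rw [mul_assoc, rpow_sub_two_mul_sq (by positivity)]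

lemma sharpTot_ofReal_eq {d m : ℕ} {a : EuclideanSpace ℝ (Fin d ⊕ Fin d) → ℝ}
    {p : MvPolynomial (Fin d ⊕ Fin d) ℝ} (hp : ∀ w, a w = eval (fun i => w i) p)
    (hpdeg : p.totalDegree ≤ m) (n : ℕ) :
    sharpTot (fun v => (a v : ℂ)) (n + 1) =
      fun v => (a v : ℂ) ^ (n + 1) + polyFn (sharpRemainder (map (algebraMap ℝ ℂ) p) m n) v := by
  have ha : (fun v => (a v : ℂ)) = polyFn (map (algebraMap ℝ ℂ) p) :=
    funext fun v => by rw [hp, ofReal_eval_eq_polyFn_map]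
  rw [ha, sharpTot_polyFn ((TotalDegreeLE.of_totalDegree_le hpdeg).map _), ← ha]
  rfl

theorem stmt8_general {d m : ℕ}
    (a : EuclideanSpace ℝ (Fin d ⊕ Fin d) → ℝ)
    (p : MvPolynomial (Fin d ⊕ Fin d) ℝ)
    (hp : ∀ w, a w = MvPolynomial.eval (fun i => w i) p)
    (hpdeg : p.totalDegree = m)
    (C₁ B₁ : ℝ) (hC₁ : 1 ≤ C₁)
    (hder : ∀ (α : Fin d ⊕ Fin d → ℕ) (w),
      |mderiv α a w| ≤ C₁ * jap w ^ ((m : ℝ) - (mdeg α : ℝ)))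
    (hell : ∀ w ∉ QQ d B₁, jap w ^ m ≤ C₁ * a w ∧ 1 ≤ a w)
    (n : ℕ) (hn : 1 ≤ n) :
    ∃ C' B' : ℝ, 0 < C' ∧ 0 < B' ∧
      (∀ w ∉ QQ d B',
        jap w ^ (n * m) / C' ≤ (sharpTot (fun v => (a v : ℂ)) n w).re ∧
        (sharpTot (fun v => (a v : ℂ)) n w).re ≤ C' * jap w ^ (n * m)) ∧
      ∀ (w) (γ : Fin d ⊕ Fin d → ℕ),
        ‖Dm γ (fun v => sharpTot (fun u => (a u : ℂ)) n v - ((a v : ℝ) : ℂ) ^ n) w‖ ≤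
          C' ^ (mdeg γ + 1) * jap w ^ (((n * m : ℕ) : ℝ) - (mdeg γ : ℝ) - 2) := by
  obtain ⟨k, rfl⟩ : ∃ k, n = k + 1 := ⟨n - 1, by omega⟩
  have hpc := (TotalDegreeLE.of_totalDegree_le hpdeg.le).map (algebraMap ℝ ℂ)
  have hsharp := sharpTot_ofReal_eq hp hpdeg.le k
  set R := sharpRemainder (map (algebraMap ℝ ℂ) p) m k
  obtain ⟨K, hK0, hK⟩ := exists_norm_mderiv_polyFn_le (hpc.sharpRemainder k)
  set c := C₁ ^ (k + 1)
  have hc : 0 < c := by positivity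
  refine ⟨2 * c + K + 1, max B₁ (√(2 * K * c) + 1), by positivity,
    lt_of_lt_of_le (by positivity) (le_max_right _ _), fun w hw => ?_, fun w γ => ?_⟩
  · obtain ⟨hlow, hone⟩ := hell w (notMem_QQ_of_le (le_max_left _ _) hw)
    have hup : a w ≤ C₁ * jap w ^ m := by
      simpa [mderiv_zero, mdeg] using (le_abs_self _).trans (hder 0 w)
    have hR : ‖polyFn R w‖ ≤ K * jap w ^ ((((k + 1) * m : ℕ) : ℝ) - 2) := by
      simpa [mderiv_zero, mdeg] using hK 0 w
    have hJK : 2 * K * c ≤ jap w ^ 2 := by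
      have := (le_max_right _ _).trans (le_jap_of_notMem_QQ hw)
      nlinarith [Real.sq_sqrt (by positivity : 0 ≤ 2 * K * c), Real.sqrt_nonneg (2 * K * c)]
    simpa [hsharp, ← Complex.ofReal_pow] using
      pow_add_re_bounds (one_le_jap w) (by positivity) hK0 (by linarith) hlow hup hR hJK
  · have hKC : K ≤ (2 * c + K + 1) ^ (mdeg γ + 1) :=
      (le_self_pow₀ (by linarith) (Nat.succ_ne_zero _)).trans' (by linarith)
    have hdiff : (fun v => sharpTot (fun u => (a u : ℂ)) (k + 1) v - (a v : ℂ) ^ (k + 1)) =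
        polyFn R := by
      simp [hsharp]
    rw [hdiff, norm_Dm]
    refine (hK γ w).trans_eq ?_ |>.trans
      (mul_le_mul_of_nonneg_right hKC (Real.rpow_nonneg (jap_pos w).le _))
    congr 2
    push_cast
    ring

/-- two-sided bounds for `a^{(#n)}` and estimates for `a^{(#n)} - a^n`, for a fixed
`n ≥ 1` and an elliptic Shubin polynomial `a` of degree `m ≥ 2`. -/
theorem stmt8 {d m : ℕ} (hd : 1 ≤ d) (hm : 2 ≤ m)
    (a : EuclideanSpace ℝ (Fin d ⊕ Fin d) → ℝ)
    (p : MvPolynomial (Fin d ⊕ Fin d) ℝ)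
    (hp : ∀ w, a w = MvPolynomial.eval (fun i => w i) p)
    (hpdeg : p.totalDegree = m)
    (C₁ B₁ : ℝ) (hC₁ : 1 ≤ C₁) (hB₁ : 1 ≤ B₁)
    (hder : ∀ (α : Fin d ⊕ Fin d → ℕ) (w),
      |mderiv α a w| ≤ C₁ * jap w ^ ((m : ℝ) - (mdeg α : ℝ)))
    (hell : ∀ w ∉ QQ d B₁, jap w ^ m ≤ C₁ * a w ∧ 1 ≤ a w)
    (n : ℕ) (hn : 1 ≤ n) :
    ∃ C' B' : ℝ, 0 < C' ∧ 0 < B' ∧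
      (∀ w ∉ QQ d B',
        jap w ^ (n * m) / C' ≤ (sharpTot (fun v => (a v : ℂ)) n w).re ∧
        (sharpTot (fun v => (a v : ℂ)) n w).re ≤ C' * jap w ^ (n * m)) ∧
      ∀ (w) (γ : Fin d ⊕ Fin d → ℕ),
        ‖Dm γ (fun v => sharpTot (fun u => (a u : ℂ)) n v - ((a v : ℝ) : ℂ) ^ n) w‖ ≤
          C' ^ (mdeg γ + 1) * jap w ^ (((n * m : ℕ) : ℝ) - (mdeg γ : ℝ) - 2) :=
  stmt8_general a p hp hpdeg C₁ B₁ hC₁ hder hell n hn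
end
end

section
/- Let $(\widehat{M}_n)_{n\ge0}$ be a sequence of positive numbers with $\widehat{M}_0=1$ and $\lim_{n\to\infty}\widehat{M}_n^{1/n}=\infty$, and let $m$ be a positive integer. Define $f(y)=\sum_{n=0}^{\infty}y^{mn}/\widehat{M}_n$ for $y>0$ (the series converges and may be differentiated term by term). Then $\lim_{y\to\infty}\dfrac{y\,f'(y)}{f(y)}=\infty$. -/
/-!
With `a n = 1 / M̂ n` and `P x = ∑ a n xⁿ`, we have `f y = P (y ^ m)` and
`y f'(y) / f(y) = m · x P'(x) / P(x)` at `x = y ^ m`, so it suffices that `x P'(x) / P(x) → ∞`.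
For any `N` with `a N > 0`, the head `∑_{n<N} a n xⁿ` is `O(x^(N-1))` while `P x ≥ a N x^N`,
so the head is eventually at most `P x / 2`; as `x P'(x) = ∑ n a n xⁿ` is at least `N` times
the tail, `x P'(x) / P(x) ≥ N / 2` for large `x`.
-/

open Filter

noncomputable def powSeries (a : ℕ → ℝ) (x : ℝ) : ℝ := ∑' n, a n * x ^ n

section PowSeries

variable {a : ℕ → ℝ}

lemma summable_natCast_mul_mul_pow (hsum : ∀ r, Summable fun n => a n * r ^ n) (r : ℝ) :
    Summable fun n : ℕ => n * a n * r ^ n := by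
  refine (hsum (2 * |r|)).norm.of_norm_bounded fun n => ?_
  have hn : (n : ℝ) ≤ 2 ^ n := by exact_mod_cast Nat.lt_two_pow_self.le
  simp only [norm_mul, norm_pow, Real.norm_eq_abs, abs_abs, mul_pow, abs_two, Nat.abs_cast]
  calc n * |a n| * |r| ^ n = |a n| * (n * |r| ^ n) := by ring
    _ ≤ |a n| * (2 ^ n * |r| ^ n) := by gcongr

lemma hasDerivAt_powSeries (hsum : ∀ r, Summable fun n => a n * r ^ n) (x : ℝ) :
    HasDerivAt (powSeries a) (∑' n : ℕ, n * a n * x ^ (n - 1)) x := by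
  set R := |x| + 1
  have hR : 1 ≤ R := by simp [R]
  have hx : x ∈ Set.Ioo (-R) R := abs_lt.mp (lt_add_one |x|)
  refine hasDerivAt_tsum_of_isPreconnected (g' := fun n y => n * a n * y ^ (n - 1))
    (summable_natCast_mul_mul_pow hsum R).norm isOpen_Ioo isPreconnected_Ioo
    (fun n y _ => ((hasDerivAt_pow n y).const_mul (a n)).congr_deriv (by ring))
    (fun n y hy => ?_) hx (hsum x) hx
  have hy : ‖y‖ ≤ R := abs_le.mpr ⟨hy.1.le, hy.2.le⟩
  calc ‖(n : ℝ) * a n * y ^ (n - 1)‖ = ‖(n : ℝ) * a n‖ * ‖y‖ ^ (n - 1) := by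
        rw [norm_mul, norm_pow]
    _ ≤ ‖(n : ℝ) * a n‖ * R ^ n := by
        gcongr
        exact (pow_le_pow_left₀ (norm_nonneg y) hy _).trans (pow_le_pow_right₀ hR (n.sub_le 1))
    _ = ‖(n : ℝ) * a n * R ^ n‖ := by
        rw [norm_mul _ (R ^ n), norm_pow, Real.norm_of_nonneg (by linarith : 0 ≤ R)]

lemma mul_deriv_powSeries (hsum : ∀ r, Summable fun n => a n * r ^ n) (x : ℝ) :
    x * deriv (powSeries a) x = ∑' n : ℕ, n * a n * x ^ n := by
  rw [(hasDerivAt_powSeries hsum x).deriv, ← tsum_mul_left]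
  congr 1 with n
  rcases eq_or_ne n 0 with rfl | hn
  · simp
  · rw [← mul_pow_sub_one hn x]; ring

variable (ha : ∀ n, 0 ≤ a n) (hsum : ∀ r, Summable fun n => a n * r ^ n)
include ha hsum

lemma natCast_mul_sub_sum_range_le_tsum {x : ℝ} (hx : 0 ≤ x) (N : ℕ) :
    N * (powSeries a x - ∑ n ∈ Finset.range N, a n * x ^ n)
      ≤ ∑' n : ℕ, n * a n * x ^ n := by
  have hsum' := summable_natCast_mul_mul_pow hsum x
  rw [powSeries, ← (hsum x).sum_add_tsum_nat_add N, ← hsum'.sum_add_tsum_nat_add N,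
    add_sub_cancel_left, ← tsum_mul_left]
  have hhead : 0 ≤ ∑ n ∈ Finset.range N, (n : ℝ) * a n * x ^ n :=
    Finset.sum_nonneg fun n _ => by have := ha n; positivity
  have htail : ∑' k, (N : ℝ) * (a (k + N) * x ^ (k + N))
      ≤ ∑' k : ℕ, ((k + N : ℕ) : ℝ) * a (k + N) * x ^ (k + N) :=
    Summable.tsum_le_tsum (fun k => by rw [← mul_assoc]; have := ha (k + N); gcongr; omega)
      (((summable_nat_add_iff N).mpr (hsum x)).mul_left _) ((summable_nat_add_iff N).mpr hsum')
  linarith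

lemma pow_mul_le_powSeries {x : ℝ} (hx : 0 ≤ x) (N : ℕ) : a N * x ^ N ≤ powSeries a x :=
  (hsum x).le_tsum N fun n _ => by have := ha n; positivity

lemma two_mul_sum_range_le_powSeries {N : ℕ} (hN : N ≠ 0) (haN : 0 < a N) {x : ℝ}
    (hx1 : 1 ≤ x) (hx : 2 * (∑ n ∈ Finset.range N, a n) / a N ≤ x) :
    2 * ∑ n ∈ Finset.range N, a n * x ^ n ≤ powSeries a x := by
  have hhead :
      ∑ n ∈ Finset.range N, a n * x ^ n ≤ (∑ n ∈ Finset.range N, a n) * x ^ (N - 1) := by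
    rw [Finset.sum_mul]
    refine Finset.sum_le_sum fun n hn => ?_
    have := ha n
    gcongr a n * ?_
    exact pow_le_pow_right₀ hx1 (by have := Finset.mem_range.mp hn; omega)
  have hxN : 2 * (∑ n ∈ Finset.range N, a n) ≤ a N * x := by rwa [div_le_iff₀' haN] at hx
  calc 2 * ∑ n ∈ Finset.range N, a n * x ^ n
        ≤ 2 * (∑ n ∈ Finset.range N, a n) * x ^ (N - 1) := by linarith
    _ ≤ a N * x * x ^ (N - 1) := by gcongr
    _ = a N * x ^ N := by rw [mul_assoc, mul_pow_sub_one hN]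
    _ ≤ powSeries a x := pow_mul_le_powSeries ha hsum (by linarith) N

theorem tendsto_mul_deriv_div_powSeries_atTop (hfreq : ∃ᶠ n in atTop, 0 < a n) :
    Tendsto (fun x => x * deriv (powSeries a) x / powSeries a x) atTop atTop := by
  refine tendsto_atTop.mpr fun C => ?_
  obtain ⟨N, haN, hN⟩ :=
    (hfreq.and_eventually (eventually_ge_atTop (⌈2 * C⌉₊ + 1))).exists
  filter_upwards [eventually_ge_atTop 1,
    eventually_ge_atTop (2 * (∑ n ∈ Finset.range N, a n) / a N)] with x hx1 hx
  have hx0 : 0 ≤ x := zero_le_one.trans hx1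
  have hP : 0 < powSeries a x :=
    (mul_pos haN (by positivity)).trans_le (pow_mul_le_powSeries ha hsum hx0 N)
  have hhead := two_mul_sum_range_le_powSeries ha hsum (by omega) haN hx1 hx
  have htail := natCast_mul_sub_sum_range_le_tsum ha hsum hx0 N
  have hC : 2 * C ≤ N :=
    (Nat.le_ceil _).trans (by exact_mod_cast (by omega : ⌈2 * C⌉₊ ≤ N))
  rw [le_div_iff₀ hP, mul_deriv_powSeries hsum]
  nlinarith [mul_le_mul_of_nonneg_right hC hP.le,
    mul_nonneg (Nat.cast_nonneg N) (sub_nonneg.mpr hhead)]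

end PowSeries

lemma pow_le_of_le_rpow_one_div {c M : ℝ} (hc : 0 ≤ c) (hM : 0 ≤ M) {n : ℕ} (hn : n ≠ 0)
    (h : c ≤ M ^ (1 / (n : ℝ))) : c ^ n ≤ M := by
  rw [one_div, Real.le_rpow_inv_iff_of_pos hc hM (by positivity), Real.rpow_natCast] at h
  exact h

lemma summable_inv_mul_pow_of_tendsto_rpow {M : ℕ → ℝ} (hMpos : ∀ n, 0 < M n)
    (hlim : Tendsto (fun n : ℕ => M n ^ (1 / (n : ℝ))) atTop atTop) (r : ℝ) :
    Summable fun n => (M n)⁻¹ * r ^ n := by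
  refine Summable.of_norm_bounded_eventually_nat summable_geometric_two ?_
  filter_upwards [hlim.eventually_ge_atTop (2 * |r| + 1), eventually_ne_atTop 0] with n hn hn0
  have hMn := pow_le_of_le_rpow_one_div (by positivity) (hMpos n).le hn0 hn
  rw [norm_mul, norm_inv, norm_pow, Real.norm_of_nonneg (hMpos n).le, Real.norm_eq_abs,
    inv_mul_eq_div, div_le_iff₀ (hMpos n)]
  calc |r| ^ n = (1 / 2) ^ n * (2 * |r|) ^ n := by
        rw [← mul_pow, one_div, inv_mul_cancel_left₀ two_ne_zero]
    _ ≤ (1 / 2) ^ n * (2 * |r| + 1) ^ n := by gcongr; linarith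
    _ ≤ (1 / 2) ^ n * M n := by gcongr

lemma mul_deriv_comp_pow {f : ℝ → ℝ} {m : ℕ} (hm : m ≠ 0) {y : ℝ}
    (hf : DifferentiableAt ℝ f (y ^ m)) :
    y * deriv (fun t => f (t ^ m)) y = m * (y ^ m * deriv f (y ^ m)) := by
  have hcomp : HasDerivAt (fun t => f (t ^ m)) (deriv f (y ^ m) * (m * y ^ (m - 1))) y :=
    hf.hasDerivAt.comp y (hasDerivAt_pow m y)
  rw [hcomp.deriv, ← mul_pow_sub_one hm y]
  ring

theorem stmt9_general (Mh : ℕ → ℝ) (hMpos : ∀ n, 0 < Mh n)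
    (hlim : Filter.Tendsto (fun n : ℕ => Mh n ^ (1 / (n : ℝ))) Filter.atTop Filter.atTop)
    (m : ℕ) (hm : 1 ≤ m) :
    Filter.Tendsto
      (fun y : ℝ =>
        y * deriv (fun t : ℝ => ∑' n, t ^ (m * n) / Mh n) y /
          (∑' n, y ^ (m * n) / Mh n))
      Filter.atTop Filter.atTop := by
  set a : ℕ → ℝ := fun n => (Mh n)⁻¹
  have ha : ∀ n, 0 ≤ a n := fun n => (inv_pos.mpr (hMpos n)).le
  have hsum := summable_inv_mul_pow_of_tendsto_rpow hMpos hlim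
  have hfreq : ∃ᶠ n in atTop, 0 < a n := Frequently.of_forall fun n => inv_pos.mpr (hMpos n)
  have hf (t : ℝ) : ∑' n, t ^ (m * n) / Mh n = powSeries a (t ^ m) := by
    simp only [powSeries, a, pow_mul, inv_mul_eq_div]
  simp only [hf]
  have hP := tendsto_mul_deriv_div_powSeries_atTop ha hsum hfreq
  have hpow : Tendsto (fun y : ℝ => y ^ m) atTop atTop := tendsto_pow_atTop (by omega)
  refine ((hP.comp hpow).const_mul_atTop (by positivity : (0 : ℝ) < m)).congr fun y => ?_
  rw [mul_deriv_comp_pow (by omega) (hasDerivAt_powSeries hsum _).differentiableAt]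
  simp only [Function.comp_apply]
  ring

/-- `y f'(y)/f(y) → ∞` as `y → ∞` for `f(y) = ∑ y^{mn}/M̂_n`. -/
theorem stmt9 (Mh : ℕ → ℝ) (hMpos : ∀ n, 0 < Mh n) (hM0 : Mh 0 = 1)
    (hlim : Filter.Tendsto (fun n : ℕ => Mh n ^ (1 / (n : ℝ))) Filter.atTop Filter.atTop)
    (m : ℕ) (hm : 1 ≤ m) :
    Filter.Tendsto
      (fun y : ℝ =>
        y * deriv (fun t : ℝ => ∑' n, t ^ (m * n) / Mh n) y /
          (∑' n, y ^ (m * n) / Mh n))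
      Filter.atTop Filter.atTop :=
  stmt9_general Mh hMpos hlim m hm
end

section
/- Let $d\ge1$, $\rho\in(0,1]$ and $s>0$. Let $(A_k)_{k\ge0}$ be a sequence of positive numbers with $A_0=1$ which is log-convex (i.e. $A_k^2\le A_{k-1}A_{k+1}$ for all $k\ge1$) and satisfies: for every $L>0$ there is $C_L>0$ with $k!\le C_L L^{k}A_k$ for all $k$. Let $g_0$ be a positive continuous function on $(0,\infty)$ and let $b_0\in C^{\infty}((s,\infty))$ satisfy: for every $h>0$ there exists $C>0$ such that $|b_0^{(k)}(\lambda)|\le C\,h^{k}A_k\,g_0(\lambda)\,\langle\lambda\rangle^{-\rho k}$ for all $\lambda>s$ and all $k\in\mathbb{N}$. Then the function $b(x)=b_0(|x|)$ is smooth on $\{x\in\mathbb{R}^{d}:|x|>s\}$ and satisfies: for every $h>0$ there exists $C>0$ such that $|\partial^{\alpha}b(x)|\le C\,h^{|\alpha|}A_{|\alpha|}\,g_0(|x|)\,\langle x\rangle^{-\rho|\alpha|}$ for all $|x|>s$ and all multi-indices $\alpha\in\mathbb{N}^{d}$. -/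
open scoped BigOperators

noncomputable section

namespace Stmt12Aux

open Real

variable {d : ℕ}

def mon (L : List (Fin d)) (x : EuclideanSpace ℝ (Fin d)) : ℝ := (L.map fun i => x i).prod

@[simp] lemma mon_nil (x : EuclideanSpace ℝ (Fin d)) : mon [] x = 1 := rfl

@[simp] lemma mon_cons (a : Fin d) (t : List (Fin d)) (x : EuclideanSpace ℝ (Fin d)) :
    mon (a :: t) x = x a * mon t x := by simp [mon]

def monD : List (Fin d) → EuclideanSpace ℝ (Fin d) → (EuclideanSpace ℝ (Fin d) →L[ℝ] ℝ)
  | [], _ => 0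
  | a :: t, x => x a • monD t x + mon t x • EuclideanSpace.proj a

def picks (i : Fin d) : List (Fin d) → List (List (Fin d))
  | [] => []
  | a :: t => (if a = i then [t] else []) ++ (picks i t).map (a :: ·)

lemma hasFDerivAt_mon (L : List (Fin d)) (x : EuclideanSpace ℝ (Fin d)) :
    HasFDerivAt (mon L) (monD L x) x := by
  induction L with
  | nil =>
      have : mon (d := d) [] = fun _ => (1:ℝ) := rfl
      rw [this]; simpa [monD] using hasFDerivAt_const (1:ℝ) x
  | cons a t ih =>
      have h1 : HasFDerivAt (fun y : EuclideanSpace ℝ (Fin d) => y a)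
          (EuclideanSpace.proj (𝕜 := ℝ) a) x := (EuclideanSpace.proj (𝕜 := ℝ) a).hasFDerivAt
      have h2 := h1.mul ih
      have he : (fun y : EuclideanSpace ℝ (Fin d) => y a * mon t y) = mon (a :: t) := by
        funext y; simp
      rw [← he]
      exact h2

lemma sum_map_mul_left {α : Type*} (l : List α) (g : α → ℝ) (c : ℝ) :
    (l.map fun y => c * g y).sum = c * (l.map g).sum := by
  induction l with
  | nil => simp
  | cons a t ih => simp [ih, mul_add]

lemma sum_map_add {α : Type*} (l : List α) (f g : α → ℝ) :
    (l.map fun y => f y + g y).sum = (l.map f).sum + (l.map g).sum := by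
  induction l with
  | nil => simp
  | cons a t ih => simp [ih]; ring

lemma sum_map_const {α : Type*} (l : List α) (c : ℝ) :
    (l.map fun _ => c).sum = l.length * c := by
  induction l with
  | nil => simp
  | cons a t ih => simp [ih]; ring

lemma sum_map_smul {α : Type*} (l : List α) (f : α → ℝ) (z : ℂ) :
    (l.map fun a => f a • z).sum = (l.map f).sum • z := by
  induction l with
  | nil => simp
  | cons a t ih => rw [List.map_cons, List.sum_cons, ih, List.map_cons, List.sum_cons, add_smul]

@[simp] lemma proj_single (i a : Fin d) :
    EuclideanSpace.proj (𝕜 := ℝ) a (EuclideanSpace.single i (1:ℝ)) = if a = i then 1 else 0 := by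
  simp [EuclideanSpace.single_apply]

lemma monD_single (i : Fin d) (L : List (Fin d)) (x : EuclideanSpace ℝ (Fin d)) :
    monD L x (EuclideanSpace.single i 1) = ((picks i L).map fun L' => mon L' x).sum := by
  induction L with
  | nil => simp [monD, picks]
  | cons a t ih =>
      have hmap : (((picks i t).map (a :: ·)).map fun L' => mon L' x)
          = (picks i t).map fun L' => x a * mon L' x := by
        rw [List.map_map]; apply List.map_congr_left; intro L' _; simp [Function.comp]
      by_cases h : a = i
      · simp only [monD, ContinuousLinearMap.add_apply, ContinuousLinearMap.smul_apply,
          proj_single, if_pos h, picks, List.map_append, List.sum_append, ih, hmap,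
          sum_map_mul_left, smul_eq_mul]
        simp [h]
        ring
      · simp only [monD, ContinuousLinearMap.add_apply, ContinuousLinearMap.smul_apply,
          proj_single, if_neg h, picks, List.map_append, List.sum_append, ih, hmap,
          sum_map_mul_left, smul_eq_mul]
        simp [h]

def nD (x : EuclideanSpace ℝ (Fin d)) : EuclideanSpace ℝ (Fin d) →L[ℝ] ℝ :=
  (2 * ‖x‖)⁻¹ • ∑ i, (2 * x i) • EuclideanSpace.proj (𝕜 := ℝ) i

lemma nD_single (x : EuclideanSpace ℝ (Fin d)) (hx : x ≠ 0) (i : Fin d) :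
    nD x (EuclideanSpace.single i 1) = x i / ‖x‖ := by
  have hn : ‖x‖ ≠ 0 := norm_ne_zero_iff.mpr hx
  simp only [nD, ContinuousLinearMap.smul_apply, ContinuousLinearMap.sum_apply,
    ContinuousLinearMap.smul_apply, proj_single, smul_eq_mul, mul_ite, mul_one, mul_zero]
  rw [Finset.sum_ite_eq' Finset.univ i (fun j => 2 * x j)]
  simp only [Finset.mem_univ, if_pos]
  field_simp

lemma hasFDerivAt_norm_euc (x : EuclideanSpace ℝ (Fin d)) (hx : x ≠ 0) :
    HasFDerivAt (fun y : EuclideanSpace ℝ (Fin d) => ‖y‖) (nD x) x := by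
  have hpos : 0 < ‖x‖ := norm_pos_iff.mpr hx
  have hsum : ∀ y : EuclideanSpace ℝ (Fin d), ∑ i, (y i)^2 = ‖y‖^2 := by
    intro y
    rw [EuclideanSpace.norm_eq, Real.sq_sqrt (by positivity)]
    simp [Real.norm_eq_abs, sq_abs]
  have hg : HasFDerivAt (fun y : EuclideanSpace ℝ (Fin d) => ∑ i, (y i)^2)
      (∑ i, (2 * x i) • EuclideanSpace.proj (𝕜 := ℝ) i) x := by
    refine HasFDerivAt.fun_sum fun i _ => ?_
    have h1 : HasFDerivAt (fun y : EuclideanSpace ℝ (Fin d) => y i)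
        (EuclideanSpace.proj (𝕜 := ℝ) i) x := (EuclideanSpace.proj (𝕜 := ℝ) i).hasFDerivAt
    have h2 := h1.mul h1
    have he : (fun y : EuclideanSpace ℝ (Fin d) => y i * y i)
        = fun y : EuclideanSpace ℝ (Fin d) => (y i)^2 := by funext y; ring
    rw [← he]
    refine h2.congr_fderiv ?_
    rw [two_mul, add_smul]
  have hsq : HasDerivAt Real.sqrt (1 / (2 * Real.sqrt (∑ i, (x i)^2))) (∑ i, (x i)^2) := by
    refine Real.hasDerivAt_sqrt ?_
    rw [hsum]; positivity
  have h := hsq.comp_hasFDerivAt x hg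
  have heq : (Real.sqrt ∘ fun y : EuclideanSpace ℝ (Fin d) => ∑ i, (y i)^2)
      = fun y : EuclideanSpace ℝ (Fin d) => ‖y‖ := by
    funext y; simp [Function.comp, hsum y, Real.sqrt_sq (norm_nonneg y)]
  rw [heq] at h
  have hscal : (1 / (2 * Real.sqrt (∑ i, (x i)^2))) = (2 * ‖x‖)⁻¹ := by
    rw [hsum, Real.sqrt_sq (norm_nonneg x), one_div]
  rw [hscal] at h
  exact h


def B (b₀ : ℝ → ℂ) (k : ℕ) : ℝ → ℂ := iteratedDeriv k b₀

structure Tm (d : ℕ) where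
  c : ℝ
  k : ℕ
  L : List (Fin d)
  m : ℕ

def val (b₀ : ℝ → ℂ) (T : Tm d) (x : EuclideanSpace ℝ (Fin d)) : ℂ :=
  (T.c * mon T.L x * ‖x‖ ^ (-(T.m : ℤ))) • B b₀ T.k ‖x‖

def dT (i : Fin d) (T : Tm d) : List (Tm d) :=
  ⟨T.c, T.k + 1, i :: T.L, T.m + 1⟩ ::
  ⟨-(T.m : ℝ) * T.c, T.k, i :: T.L, T.m + 2⟩ ::
  ((picks i T.L).map fun L' => ⟨T.c, T.k, L', T.m⟩)

def Tms : List (Fin d) → List (Tm d)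
  | [] => [⟨1, 0, [], 0⟩]
  | i :: l => (Tms l).flatMap (dT i)

section WithB

variable {b₀ : ℝ → ℂ} {s : ℝ}

lemma Bsmooth (hb : ContDiffOn ℝ (⊤ : ℕ∞) b₀ (Set.Ioi s)) (k : ℕ) :
    ContDiffOn ℝ (⊤ : ℕ∞) (B b₀ k) (Set.Ioi s) := by
  induction k with
  | zero => simpa [B, iteratedDeriv_zero] using hb
  | succ k ih =>
      have : B b₀ (k+1) = deriv (B b₀ k) := iteratedDeriv_succ
      rw [this]
      exact ih.deriv_of_isOpen isOpen_Ioi (by simp)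

lemma B_hasDerivAt (hb : ContDiffOn ℝ (⊤ : ℕ∞) b₀ (Set.Ioi s)) (k : ℕ) {t : ℝ} (ht : s < t) :
    HasDerivAt (B b₀ k) (B b₀ (k+1) t) t := by
  have h1 : ContDiffAt ℝ (⊤ : ℕ∞) (B b₀ k) t := (Bsmooth hb k).contDiffAt (isOpen_Ioi.mem_nhds ht)
  have h2 : DifferentiableAt ℝ (B b₀ k) t := h1.differentiableAt (by simp)
  have h3 := h2.hasDerivAt
  have h4 : deriv (B b₀ k) t = B b₀ (k+1) t := by
    rw [show B b₀ (k+1) = deriv (B b₀ k) from iteratedDeriv_succ]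
  rwa [h4] at h3

lemma val_hasFDerivAt (hs : 0 < s) (hb : ContDiffOn ℝ (⊤ : ℕ∞) b₀ (Set.Ioi s))
    (T : Tm d) (x : EuclideanSpace ℝ (Fin d)) (hx : s < ‖x‖) :
    ∃ D : EuclideanSpace ℝ (Fin d) →L[ℝ] ℂ, HasFDerivAt (val b₀ T) D x ∧
      ∀ i, D (EuclideanSpace.single i 1) = ((dT i T).map fun T' => val b₀ T' x).sum := by
  have hr : 0 < ‖x‖ := hs.trans hx
  have hrne : ‖x‖ ≠ 0 := ne_of_gt hr
  have hx0 : x ≠ 0 := norm_pos_iff.mp hr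
  have hnorm := hasFDerivAt_norm_euc x hx0
  have hmon := hasFDerivAt_mon T.L x
  have hzp : HasFDerivAt (fun y : EuclideanSpace ℝ (Fin d) => ‖y‖ ^ (-(T.m:ℤ)))
      ((((-(T.m:ℤ)) : ℝ) * ‖x‖ ^ (-(T.m:ℤ) - 1)) • nD x) x := by
    have h1 := hasDerivAt_zpow (-(T.m:ℤ)) ‖x‖ (Or.inl hrne)
    have h2 := h1.comp_hasFDerivAt x hnorm
    exact h2.congr_fderiv (by rw [Int.cast_neg])
  have hc := (hmon.const_mul T.c).mul hzp
  have hB : HasFDerivAt (fun y : EuclideanSpace ℝ (Fin d) => B b₀ T.k ‖y‖)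
      ((ContinuousLinearMap.smulRight (1 : ℝ →L[ℝ] ℝ) (B b₀ (T.k+1) ‖x‖)).comp (nD x)) x := by
    have h1 := B_hasDerivAt hb T.k hx
    have h2 := hasDerivAt_iff_hasFDerivAt.mp h1
    exact h2.comp x hnorm
  have htot := hc.smul hB
  refine ⟨_, htot, ?_⟩
  intro i
  have ez1 : ‖x‖ ^ (-((T.m:ℤ) + 1)) = ‖x‖ ^ (-(T.m:ℤ)) * ‖x‖⁻¹ := by
    rw [show (-((T.m:ℤ) + 1)) = -(T.m:ℤ) - 1 by ring, zpow_sub_one₀ hrne]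
  have ez2 : ‖x‖ ^ (-((T.m:ℤ) + 2)) = ‖x‖ ^ (-(T.m:ℤ)) * ‖x‖⁻¹ * ‖x‖⁻¹ := by
    rw [show (-((T.m:ℤ) + 2)) = (-(T.m:ℤ) - 1) - 1 by ring, zpow_sub_one₀ hrne,
      zpow_sub_one₀ hrne]
  simp only [ContinuousLinearMap.add_apply, ContinuousLinearMap.smul_apply, Pi.mul_apply,
    ContinuousLinearMap.smulRight_apply, ContinuousLinearMap.comp_apply,
    ContinuousLinearMap.one_apply, nD_single x hx0 i, monD_single i T.L x, smul_eq_mul]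
  simp only [dT, List.map_cons, List.sum_cons, val, mon_cons,
    Nat.cast_add, Nat.cast_ofNat, Nat.cast_one, List.map_map]
  have hcomp : ((fun T' : Tm d => (T'.c * mon T'.L x * ‖x‖ ^ (-(T'.m:ℤ))) • B b₀ T'.k ‖x‖) ∘
      (fun L' => (⟨T.c, T.k, L', T.m⟩ : Tm d)))
      = fun L' : List (Fin d) => ((T.c * ‖x‖ ^ (-(T.m:ℤ))) * mon L' x) • B b₀ T.k ‖x‖ := by
    funext L'
    simp only [Function.comp]
    rw [show T.c * mon L' x * ‖x‖ ^ (-(T.m:ℤ)) = (T.c * ‖x‖ ^ (-(T.m:ℤ))) * mon L' x from by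
      ring]
  rw [hcomp, sum_map_smul, sum_map_mul_left, ez1, ez2, zpow_sub_one₀ hrne]
  simp only [Complex.real_smul]
  push_cast
  ring


lemma sum_val_hasFDerivAt (hs : 0 < s) (hb : ContDiffOn ℝ (⊤ : ℕ∞) b₀ (Set.Ioi s))
    (ts : List (Tm d)) (x : EuclideanSpace ℝ (Fin d)) (hx : s < ‖x‖) :
    ∃ D : EuclideanSpace ℝ (Fin d) →L[ℝ] ℂ,
      HasFDerivAt (fun y => (ts.map fun T => val b₀ T y).sum) D x ∧
      ∀ i, D (EuclideanSpace.single i 1)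
        = ((ts.flatMap (dT i)).map fun T' => val b₀ T' x).sum := by
  induction ts with
  | nil => exact ⟨0, by simpa using hasFDerivAt_const (0:ℂ) x, by simp⟩
  | cons T ts ih =>
      obtain ⟨D1, hD1, h1⟩ := val_hasFDerivAt hs hb T x hx
      obtain ⟨D2, hD2, h2⟩ := ih
      refine ⟨D1 + D2, ?_, ?_⟩
      · have := hD1.add hD2
        exact this
      · intro i
        simp only [ContinuousLinearMap.add_apply, h1, h2, List.flatMap_cons,
          List.map_append, List.sum_append]

lemma listDeriv_expand (hs : 0 < s) (hb : ContDiffOn ℝ (⊤ : ℕ∞) b₀ (Set.Ioi s))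
    (l : List (Fin d)) :
    ∀ x : EuclideanSpace ℝ (Fin d), s < ‖x‖ →
      listDeriv l (fun y : EuclideanSpace ℝ (Fin d) => b₀ ‖y‖) x
        = ((Tms l).map fun T => val b₀ T x).sum := by
  induction l with
  | nil =>
      intro x hx
      simp [listDeriv, Tms, val, mon, B, iteratedDeriv_zero]
  | cons i l ih =>
      intro x hx
      have hU : IsOpen {y : EuclideanSpace ℝ (Fin d) | s < ‖y‖} :=
        isOpen_lt continuous_const continuous_norm
      obtain ⟨D, hD, hDi⟩ := sum_val_hasFDerivAt hs hb (Tms l) x hx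
      have hev : (listDeriv l fun y : EuclideanSpace ℝ (Fin d) => b₀ ‖y‖)
          =ᶠ[nhds x] fun y => ((Tms l).map fun T => val b₀ T y).sum :=
        Filter.eventuallyEq_of_mem (hU.mem_nhds hx) (fun y hy => ih y hy)
      show fderiv ℝ (listDeriv l fun y : EuclideanSpace ℝ (Fin d) => b₀ ‖y‖) x
          (EuclideanSpace.single i 1) = _
      rw [hev.fderiv_eq, hD.fderiv]
      exact hDi i

end WithB

lemma picks_length {i : Fin d} : ∀ {L L' : List (Fin d)}, L' ∈ picks i L →
    L'.length + 1 = L.length := by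
  intro L
  induction L with
  | nil => intro L' h; simp [picks] at h
  | cons a t ih =>
      intro L' h
      simp only [picks, List.mem_append, List.mem_map] at h
      rcases h with h | ⟨L'', hL'', rfl⟩
      · by_cases ha : a = i
        · simp [ha] at h; subst h; simp
        · simp [ha] at h
      · have := ih hL''
        simp [← this]

lemma length_picks (i : Fin d) : ∀ L : List (Fin d), (picks i L).length ≤ L.length := by
  intro L
  induction L with
  | nil => simp [picks]
  | cons a t ih =>
      by_cases ha : a = i <;> simp [picks, ha] <;> omega

lemma Tms_inv (l : List (Fin d)) : ∀ T ∈ Tms l,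
    T.L.length + l.length = T.k + T.m ∧ T.k ≤ l.length ∧ T.L.length ≤ l.length ∧
      T.m ≤ 2 * l.length := by
  induction l with
  | nil =>
      intro T hT
      simp only [Tms, List.mem_singleton] at hT
      subst hT; simp
  | cons i l ih =>
      intro T' hT'
      simp only [Tms, List.mem_flatMap] at hT'
      obtain ⟨T, hT, hmem⟩ := hT'
      obtain ⟨h1, h2, h3, h4⟩ := ih T hT
      simp only [dT, List.mem_cons, List.mem_map] at hmem
      rcases hmem with rfl | rfl | ⟨L', hL', rfl⟩
      · simp only [List.length_cons]; omega
      · simp only [List.length_cons]; omega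
      · have := picks_length hL'
        simp only [List.length_cons]; omega


def mass (k : ℕ) (ts : List (Tm d)) : ℝ :=
  (ts.map fun T => if T.k = k then |T.c| else 0).sum

lemma mass_nonneg (k : ℕ) (ts : List (Tm d)) : 0 ≤ mass k ts := by
  apply List.sum_nonneg
  intro a ha
  simp only [List.mem_map] at ha
  obtain ⟨T, _, rfl⟩ := ha
  split <;> positivity

lemma mass_flatMap (k : ℕ) (ts : List (Tm d)) (g : Tm d → List (Tm d)) :
    mass k (ts.flatMap g) = (ts.map fun T => mass k (g T)).sum := by
  induction ts with
  | nil => simp [mass]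
  | cons T ts ih => simp only [mass, List.flatMap_cons, List.map_append, List.sum_append,
      List.map_cons, List.sum_cons] at *; rw [ih]

lemma mass_dT_le (i : Fin d) (T : Tm d) (k : ℕ) :
    mass k (dT i T) ≤ (if T.k + 1 = k then |T.c| else 0) +
      ((T.m : ℝ) + T.L.length) * (if T.k = k then |T.c| else 0) := by
  have habs : |(-(T.m : ℝ)) * T.c| = (T.m : ℝ) * |T.c| := by
    rw [abs_mul, abs_neg, Nat.abs_cast]
  have hpicks : (((picks i T.L).map fun L' => (⟨T.c, T.k, L', T.m⟩ : Tm d)).map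
      fun T' => if T'.k = k then |T'.c| else 0).sum
      = ((picks i T.L).length : ℝ) * (if T.k = k then |T.c| else 0) := by
    rw [List.map_map]
    rw [show ((fun T' : Tm d => if T'.k = k then |T'.c| else 0) ∘
        fun L' : List (Fin d) => (⟨T.c, T.k, L', T.m⟩ : Tm d))
        = fun _ : List (Fin d) => if T.k = k then |T.c| else 0 from rfl]
    exact sum_map_const _ _
  simp only [mass, dT, List.map_cons, List.sum_cons, hpicks, habs]
  have hlen : ((picks i T.L).length : ℝ) ≤ (T.L.length : ℝ) := by
    exact_mod_cast length_picks i T.L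
  by_cases h1 : T.k = k
  · have h2 : ¬ (T.k + 1 = k) := by omega
    simp only [h1, h2, if_true, if_false, eq_self_iff_true, if_neg]
    have h0 : (0:ℝ) ≤ |T.c| := abs_nonneg _
    nlinarith
  · by_cases h2 : T.k + 1 = k
    · simp only [h1, if_neg, if_false, h2, if_pos rfl]
      nlinarith [abs_nonneg T.c, Nat.cast_nonneg (α := ℝ) T.m, Nat.cast_nonneg (α := ℝ) T.L.length]
    · simp only [h1, if_neg, if_false, h2]
      nlinarith [abs_nonneg T.c, Nat.cast_nonneg (α := ℝ) T.m, Nat.cast_nonneg (α := ℝ) T.L.length]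

lemma mass_zero_of_gt (l : List (Fin d)) {k : ℕ} (hk : l.length < k) :
    mass k (Tms l) = 0 := by
  apply List.sum_eq_zero
  intro a ha
  simp only [List.mem_map] at ha
  obtain ⟨T, hT, rfl⟩ := ha
  have := (Tms_inv l T hT).2.1
  rw [if_neg (by omega)]

lemma massBound (l : List (Fin d)) :
    ∀ k, mass k (Tms l) * (Nat.factorial k : ℝ)
      ≤ 4 ^ l.length * (Nat.factorial l.length : ℝ) := by
  induction l with
  | nil =>
      intro k
      by_cases h : k = 0
      · subst h; simp [Tms, mass]
      · have : mass k (Tms ([] : List (Fin d))) = 0 := by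
          simp [Tms, mass, if_neg (Ne.symm h)]
        simp [this]
  | cons i l ih =>
      intro k
      set n := l.length with hn
      have hstep : mass k (Tms (i :: l)) ≤
          ((Tms l).map fun T => if T.k + 1 = k then |T.c| else 0).sum
            + 3 * (n:ℝ) * mass k (Tms l) := by
        rw [show Tms (i :: l) = (Tms l).flatMap (dT i) from rfl, mass_flatMap]
        calc ((Tms l).map fun T => mass k (dT i T)).sum
            ≤ ((Tms l).map fun T => (if T.k + 1 = k then |T.c| else 0) +
                3 * (n:ℝ) * (if T.k = k then |T.c| else 0)).sum := by
              apply List.sum_le_sum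
              intro T hT
              refine (mass_dT_le i T k).trans ?_
              have h4 := (Tms_inv l T hT).2.2.2
              have h3 := (Tms_inv l T hT).2.2.1
              have hif : (0:ℝ) ≤ (if T.k = k then |T.c| else 0) := by
                split <;> positivity
              have hmn : ((T.m : ℝ) + T.L.length) ≤ 3 * (n:ℝ) := by
                have hm' : (T.m : ℝ) ≤ 2 * (n:ℝ) := by exact_mod_cast h4
                have hl' : (T.L.length : ℝ) ≤ (n:ℝ) := by exact_mod_cast h3
                linarith
              nlinarith
          _ = _ := by
              rw [sum_map_add, sum_map_mul_left (g := fun T : Tm d =>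
                if T.k = k then |T.c| else 0)]
              rfl
      match k with
      | 0 =>
          have hS : ((Tms l).map fun T => if T.k + 1 = 0 then |T.c| else 0).sum = 0 := by
            apply List.sum_eq_zero
            intro a ha
            simp only [List.mem_map] at ha
            obtain ⟨T, _, rfl⟩ := ha
            simp
          have h0 := ih 0
          have hm0 := mass_nonneg 0 (Tms l)
          simp only [Nat.factorial_zero, Nat.cast_one, mul_one] at h0 ⊢
          rw [hS] at hstep
          have hfn : (Nat.factorial n : ℝ) ≤ (Nat.factorial (n+1) : ℝ) := by
            exact_mod_cast Nat.factorial_le (Nat.le_succ n)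
          have hp : (0:ℝ) < 4 ^ n := by positivity
          calc mass 0 (Tms (i :: l)) ≤ 0 + 3 * (n:ℝ) * mass 0 (Tms l) := hstep
            _ ≤ 3 * (n:ℝ) * (4 ^ n * (Nat.factorial n : ℝ)) := by nlinarith
            _ ≤ 4 ^ (n+1) * (Nat.factorial (n+1) : ℝ) := by
                rw [pow_succ]
                push_cast [Nat.factorial_succ]
                have hYpos : (0:ℝ) < 4 ^ n * (Nat.factorial n : ℝ) := by positivity
                have hnn : (0:ℝ) ≤ (n:ℝ) := Nat.cast_nonneg n
                nlinarith [hYpos, hnn]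
          
      | (k' + 1) =>
          by_cases hk : k' + 1 ≤ n + 1
          · have hS : ((Tms l).map fun T => if T.k + 1 = k' + 1 then |T.c| else 0).sum
                = mass k' (Tms l) := by
              unfold mass
              congr 1
              apply List.map_congr_left
              intro T _
              simp [Nat.succ_inj]
            rw [hS] at hstep
            have ih1 := ih k'
            have ih2 := ih (k' + 1)
            have hm1 := mass_nonneg k' (Tms l)
            have hm2 := mass_nonneg (k' + 1) (Tms l)
            have hm3 := mass_nonneg (k' + 1) (Tms (i :: l))
            have hfact : (Nat.factorial (k' + 1) : ℝ)
                = ((k' : ℝ) + 1) * (Nat.factorial k' : ℝ) := by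
              push_cast [Nat.factorial_succ]; ring
            have hfn : (Nat.factorial (n+1) : ℝ) = ((n:ℝ)+1) * (Nat.factorial n : ℝ) := by
              push_cast [Nat.factorial_succ]; ring
            have hkn : ((k':ℝ) + 1) ≤ (n:ℝ) + 1 := by exact_mod_cast hk
            have hfacpos : (0:ℝ) < (Nat.factorial k' : ℝ) := by
              exact_mod_cast Nat.factorial_pos k'
            have hfacpos2 : (0:ℝ) < (Nat.factorial (k'+1) : ℝ) := by
              exact_mod_cast Nat.factorial_pos (k'+1)
            have h4p : (0:ℝ) < 4 ^ n := by positivity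
            calc mass (k'+1) (Tms (i :: l)) * (Nat.factorial (k'+1) : ℝ)
                ≤ (mass k' (Tms l) + 3 * (n:ℝ) * mass (k'+1) (Tms l))
                    * (Nat.factorial (k'+1) : ℝ) := by nlinarith
              _ = mass k' (Tms l) * (Nat.factorial k' : ℝ) * ((k':ℝ)+1)
                  + 3 * (n:ℝ) * (mass (k'+1) (Tms l) * (Nat.factorial (k'+1) : ℝ)) := by
                  rw [hfact]; ring
              _ ≤ 4 ^ n * (Nat.factorial n : ℝ) * ((k':ℝ)+1)
                  + 3 * (n:ℝ) * (4 ^ n * (Nat.factorial n : ℝ)) := by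
                  have hnn : (0:ℝ) ≤ (n:ℝ) := Nat.cast_nonneg n
                  nlinarith
              _ ≤ 4 ^ (n+1) * (Nat.factorial (n+1) : ℝ) := by
                  rw [pow_succ, hfn]
                  have hYpos : (0:ℝ) < 4 ^ n * (Nat.factorial n : ℝ) := by positivity
                  have h1 : (4 ^ n * (Nat.factorial n : ℝ)) * ((k':ℝ)+1)
                      ≤ (4 ^ n * (Nat.factorial n : ℝ)) * ((n:ℝ)+1) :=
                    mul_le_mul_of_nonneg_left hkn hYpos.le
                  nlinarith
          · have : n + 1 < k' + 1 := by omega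
            rw [mass_zero_of_gt (i :: l) (by simpa using this), zero_mul]
            positivity

lemma A_ratio_mono (A : ℕ → ℝ) (hApos : ∀ k, 0 < A k)
    (hlc : ∀ k : ℕ, 1 ≤ k → A k ^ 2 ≤ A (k - 1) * A (k + 1)) :
    ∀ {j₁ j₂ : ℕ}, j₁ ≤ j₂ → A (j₁+1) / A j₁ ≤ A (j₂+1) / A j₂ := by
  have hstep : ∀ j, A (j+1) / A j ≤ A (j+2) / A (j+1) := by
    intro j
    have h := hlc (j+1) (by omega)
    simp only [Nat.add_sub_cancel] at h
    rw [div_le_div_iff₀ (hApos j) (hApos (j+1))]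
    nlinarith [hApos j, hApos (j+1), hApos (j+2)]
  intro j₁ j₂ hle
  induction j₂, hle using Nat.le_induction with
  | base => exact le_refl _
  | succ j₂ hle ih => exact ih.trans (hstep j₂)

lemma A_mul_le (A : ℕ → ℝ) (hApos : ∀ k, 0 < A k) (hA0 : A 0 = 1)
    (hlc : ∀ k : ℕ, 1 ≤ k → A k ^ 2 ≤ A (k - 1) * A (k + 1)) :
    ∀ k m : ℕ, A k * A m ≤ A (k + m) := by
  intro k
  induction k with
  | zero => intro m; simp [hA0]
  | succ k ih =>
      intro m
      have hr : A (k+1) / A k ≤ A (k+m+1) / A (k+m) :=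
        A_ratio_mono A hApos hlc (Nat.le_add_right k m)
      have h1 : A (k+1) * A m = (A (k+1) / A k) * (A k * A m) := by
        rw [← mul_assoc, div_mul_cancel₀ _ (hApos k).ne']
      have h2 : (A (k+1) / A k) * (A k * A m) ≤ (A (k+1) / A k) * A (k+m) :=
        mul_le_mul_of_nonneg_left (ih m) (le_of_lt (div_pos (hApos _) (hApos _)))
      have h3 : (A (k+1) / A k) * A (k+m) ≤ (A (k+m+1) / A (k+m)) * A (k+m) :=
        mul_le_mul_of_nonneg_right hr (hApos _).le
      have h4 : (A (k+m+1) / A (k+m)) * A (k+m) = A (k+m+1) :=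
        div_mul_cancel₀ _ (hApos (k+m)).ne'
      have : A (k+1) * A m ≤ A (k+m+1) := by
        rw [h1]; exact (h2.trans h3).trans_eq h4
      simpa [show k+1+m = k+m+1 from by omega] using this

lemma abs_coord_le (x : EuclideanSpace ℝ (Fin d)) (i : Fin d) : |x i| ≤ ‖x‖ := by
  rw [EuclideanSpace.norm_eq]
  have h1 : |x i|^2 ≤ ∑ j, ‖x j‖^2 := by
    have := Finset.single_le_sum (f := fun j => ‖x j‖^2)
      (fun j _ => by positivity) (Finset.mem_univ i)
    simpa [Real.norm_eq_abs, sq_abs] using this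
  calc |x i| = Real.sqrt (|x i|^2) := (Real.sqrt_sq (abs_nonneg _)).symm
    _ ≤ Real.sqrt (∑ j, ‖x j‖^2) := Real.sqrt_le_sqrt h1

lemma mon_bound (L : List (Fin d)) (x : EuclideanSpace ℝ (Fin d)) :
    |mon L x| ≤ ‖x‖ ^ L.length := by
  induction L with
  | nil => simp
  | cons a t ih =>
      rw [mon_cons, abs_mul, List.length_cons, pow_succ]
      rw [mul_comm (‖x‖ ^ t.length) ‖x‖]
      exact mul_le_mul (abs_coord_le x a) ih (abs_nonneg _) (norm_nonneg x)

lemma norm_list_sum_le {α : Type*} (l : List α) (f : α → ℂ) :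
    ‖(l.map f).sum‖ ≤ (l.map fun a => ‖f a‖).sum := by
  induction l with
  | nil => simp
  | cons a t ih =>
      simp only [List.map_cons, List.sum_cons]
      exact (norm_add_le _ _).trans (by linarith)

lemma sum_eq_mass_sum (n : ℕ) (ts : List (Tm d)) (hts : ∀ T ∈ ts, T.k ≤ n) (u : ℕ → ℝ) :
    (ts.map fun T => |T.c| * u T.k).sum = ∑ k ∈ Finset.range (n+1), mass k ts * u k := by
  induction ts with
  | nil => simp [mass]
  | cons T ts ih =>
      have hmass : ∀ k, mass k (T :: ts) = (if T.k = k then |T.c| else 0) + mass k ts := by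
        intro k; simp [mass]
      rw [List.map_cons, List.sum_cons, ih (fun T' hT' => hts T' (List.mem_cons_of_mem T hT'))]
      have hk : T.k ∈ Finset.range (n+1) := by
        simp only [Finset.mem_range]
        exact Nat.lt_succ_of_le (hts T List.mem_cons_self)
      have hrw : ∑ k ∈ Finset.range (n+1), mass k (T :: ts) * u k
          = ∑ k ∈ Finset.range (n+1),
            ((if T.k = k then |T.c| * u k else 0) + mass k ts * u k) :=
        Finset.sum_congr rfl (fun k _ => by rw [hmass k]; split <;> ring)
      rw [hrw, Finset.sum_add_distrib,
        Finset.sum_ite_eq (Finset.range (n+1)) T.k (fun k => |T.c| * u k), if_pos hk]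

lemma sum_map_mul_right {α : Type*} (l : List α) (g : α → ℝ) (c : ℝ) :
    (l.map fun y => g y * c).sum = (l.map g).sum * c := by
  induction l with
  | nil => simp
  | cons a t ih => simp [ih]; ring

lemma pow_juggle {ρ K r J : ℝ} (hρ1 : ρ ≤ 1) (hr0 : 0 < r) (hJ1 : 1 ≤ J)
    (hK0 : 0 ≤ K) (hrinv : r⁻¹ ≤ K * J⁻¹) {k n lL m : ℕ} (hkn : k ≤ n)
    (hkm : lL + n = k + m) :
    r ^ lL * (r ^ m)⁻¹ * J ^ (-(ρ * (k:ℝ))) ≤ K ^ (n - k) * J ^ (-(ρ * (n:ℝ))) := by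
  have hJ0 : (0:ℝ) < J := lt_of_lt_of_le one_pos hJ1
  have hm : m = lL + (n - k) := by omega
  have e1 : r ^ lL * (r ^ m)⁻¹ = (r⁻¹) ^ (n - k) := by
    rw [hm, pow_add, mul_inv, ← mul_assoc, mul_inv_cancel₀ (by positivity), one_mul, inv_pow]
  have e2 : (r⁻¹ : ℝ) ^ (n-k) ≤ (K * J⁻¹) ^ (n-k) :=
    pow_le_pow_left₀ (by positivity) hrinv _
  have e3 : (K * J⁻¹ : ℝ) ^ (n-k) = K ^ (n-k) * J ^ (-(((n-k):ℕ):ℝ)) := by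
    rw [mul_pow, Real.rpow_neg hJ0.le, Real.rpow_natCast, inv_pow]
  have e4 : J ^ (-(((n-k):ℕ):ℝ)) ≤ J ^ (-(ρ * (((n-k):ℕ):ℝ))) := by
    apply Real.rpow_le_rpow_of_exponent_le hJ1
    have h0 : (0:ℝ) ≤ (((n-k):ℕ):ℝ) := Nat.cast_nonneg _
    nlinarith
  have e5 : J ^ (-(ρ * (((n-k):ℕ):ℝ))) * J ^ (-(ρ * (k:ℝ))) = J ^ (-(ρ * (n:ℝ))) := by
    rw [← Real.rpow_add hJ0]
    congr 1
    rw [Nat.cast_sub hkn]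
    ring
  have hJneg : (0:ℝ) ≤ J ^ (-(ρ * (k:ℝ))) := (Real.rpow_pos_of_pos hJ0 _).le
  calc r ^ lL * (r ^ m)⁻¹ * J ^ (-(ρ * (k:ℝ)))
      = (r⁻¹)^(n-k) * J ^ (-(ρ * (k:ℝ))) := by rw [e1]
    _ ≤ (K * J⁻¹)^(n-k) * J ^ (-(ρ * (k:ℝ))) := mul_le_mul_of_nonneg_right e2 hJneg
    _ = K^(n-k) * (J ^ (-(((n-k):ℕ):ℝ)) * J ^ (-(ρ * (k:ℝ)))) := by rw [e3]; ring
    _ ≤ K^(n-k) * (J ^ (-(ρ * (((n-k):ℕ):ℝ))) * J ^ (-(ρ * (k:ℝ)))) := by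
        refine mul_le_mul_of_nonneg_left ?_ (by positivity)
        exact mul_le_mul_of_nonneg_right e4 hJneg
    _ = K ^ (n - k) * J ^ (-(ρ * (n:ℝ))) := by rw [e5]

lemma main_bound {d : ℕ} {ρ s : ℝ} (hρ0 : 0 < ρ) (hρ1 : ρ ≤ 1) (hs : 0 < s)
    {A : ℕ → ℝ} (hApos : ∀ k, 0 < A k) (hA0 : A 0 = 1)
    (hlc : ∀ k : ℕ, 1 ≤ k → A k ^ 2 ≤ A (k - 1) * A (k + 1))
    (hfac : ∀ L : ℝ, 0 < L → ∃ C_L : ℝ, 0 < C_L ∧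
      ∀ k : ℕ, (Nat.factorial k : ℝ) ≤ C_L * L ^ k * A k)
    {g₀ : ℝ → ℝ} (hg₀pos : ∀ t, 0 < t → 0 < g₀ t)
    {b₀ : ℝ → ℂ} (hb : ContDiffOn ℝ (⊤ : ℕ∞) b₀ (Set.Ioi s))
    (hb₀der : ∀ h : ℝ, 0 < h → ∃ C : ℝ, 0 < C ∧ ∀ t : ℝ, s < t → ∀ k : ℕ,
      ‖iteratedDeriv k b₀ t‖ ≤
        C * h ^ k * A k * g₀ t / Real.sqrt (1 + t ^ 2) ^ (ρ * (k : ℝ)))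
    (h : ℝ) (hh : 0 < h) :
    ∃ C : ℝ, 0 < C ∧ ∀ x : EuclideanSpace ℝ (Fin d), s < ‖x‖ → ∀ l : List (Fin d),
      ‖listDeriv l (fun y : EuclideanSpace ℝ (Fin d) => b₀ ‖y‖) x‖ ≤
        C * h ^ l.length * A l.length * g₀ ‖x‖ /
          Real.sqrt (1 + ‖x‖^2) ^ (ρ * (l.length:ℝ)) := by
  set K := Real.sqrt (1 + (1/s)^2) with hK
  have hK1 : 1 ≤ K := by
    have h1 : Real.sqrt 1 ≤ K := Real.sqrt_le_sqrt (by nlinarith [sq_nonneg (1/s)])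
    simpa using h1
  have hK0 : (0:ℝ) < K := lt_of_lt_of_le one_pos hK1
  obtain ⟨C₁, hC₁, hB1⟩ := hb₀der (h/32) (by positivity)
  obtain ⟨CL, hCL, hfacL⟩ := hfac (h/(32*K)) (by positivity)
  refine ⟨C₁ * CL, by positivity, ?_⟩
  intro x hx l
  set n := l.length with hn
  set r := ‖x‖ with hrdef
  have hr0 : (0:ℝ) < r := hs.trans hx
  set J := Real.sqrt (1 + r^2) with hJ
  have hJ1 : (1:ℝ) ≤ J := by
    have h1 : Real.sqrt 1 ≤ J := Real.sqrt_le_sqrt (by nlinarith [sq_nonneg r])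
    simpa using h1
  have hJ0 : (0:ℝ) < J := lt_of_lt_of_le one_pos hJ1
  have hJr : J ≤ K * r := by
    have hss : (1/s)^2 * s^2 = 1 := by field_simp
    have h2 : s^2 ≤ r^2 := by nlinarith
    have h3 := mul_le_mul_of_nonneg_left h2 (by positivity : (0:ℝ) ≤ (1/s)^2)
    have h1 : (1:ℝ) + r^2 ≤ (1 + (1/s)^2) * r^2 := by nlinarith
    calc J ≤ Real.sqrt ((1 + (1/s)^2) * r^2) := Real.sqrt_le_sqrt h1
      _ = K * r := by rw [Real.sqrt_mul (by positivity), Real.sqrt_sq hr0.le]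
  have hrinv : r⁻¹ ≤ K * J⁻¹ := by
    have h2 : J * r⁻¹ ≤ K := by
      calc J * r⁻¹ ≤ (K * r) * r⁻¹ := mul_le_mul_of_nonneg_right hJr (by positivity)
        _ = K := by field_simp
    calc r⁻¹ = (J * r⁻¹) * J⁻¹ := by
          rw [mul_comm J r⁻¹, mul_assoc, mul_inv_cancel₀ hJ0.ne', mul_one]
      _ ≤ K * J⁻¹ := mul_le_mul_of_nonneg_right h2 (by positivity)
  rw [listDeriv_expand hs hb l x hx]
  set u : ℕ → ℝ := fun k => (h/32)^k * A k * K^(n-k) with hu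
  have hg0 : (0:ℝ) ≤ g₀ r := (hg₀pos r hr0).le
  have hfac_outer : (0:ℝ) ≤ C₁ * g₀ r * J ^ (-(ρ * (n:ℝ))) := by positivity
  have hterm : ∀ T ∈ Tms l, ‖val b₀ T x‖
      ≤ (|T.c| * u T.k) * (C₁ * g₀ r * J ^ (-(ρ * (n:ℝ)))) := by
    intro T hT
    obtain ⟨hinv1, hinv2, _, _⟩ := Tms_inv l T hT
    have hBb := hB1 r hx T.k
    rw [← hJ] at hBb
    have hBb2 : ‖B b₀ T.k r‖ ≤ C₁ * (h/32)^T.k * A T.k * g₀ r * J ^ (-(ρ * (T.k:ℝ))) := by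
      rw [Real.rpow_neg hJ0.le, ← div_eq_mul_inv]
      exact hBb
    calc ‖val b₀ T x‖ = |T.c * mon T.L x * r ^ (-(T.m:ℤ))| * ‖B b₀ T.k r‖ := by
          rw [val, norm_smul, Real.norm_eq_abs]
      _ ≤ (|T.c| * r ^ T.L.length * (r ^ T.m)⁻¹)
          * (C₁ * (h/32)^T.k * A T.k * g₀ r * J ^ (-(ρ * (T.k:ℝ)))) := by
          apply mul_le_mul ?_ hBb2 (norm_nonneg _) ?_
          · rw [abs_mul, abs_mul]
            have hz : |r ^ (-(T.m:ℤ))| = (r ^ T.m)⁻¹ := by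
              rw [abs_of_pos (zpow_pos hr0 _), zpow_neg, zpow_natCast]
            rw [hz]
            refine mul_le_mul_of_nonneg_right ?_ (by positivity)
            exact mul_le_mul_of_nonneg_left (mon_bound T.L x) (abs_nonneg T.c)
          · exact mul_nonneg (mul_nonneg (abs_nonneg _) (pow_nonneg hr0.le _))
              (inv_nonneg.mpr (pow_nonneg hr0.le _))
      _ ≤ (|T.c| * u T.k) * (C₁ * g₀ r * J ^ (-(ρ * (n:ℝ)))) := by
          have hj := pow_juggle hρ1 hr0 hJ1 hK0.le hrinv hinv2 hinv1
          have hnn : (0:ℝ) ≤ |T.c| * (h/32)^T.k * A T.k * (C₁ * g₀ r) :=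
            mul_nonneg (mul_nonneg (mul_nonneg (abs_nonneg _) (by positivity))
              (hApos T.k).le) (by positivity)
          calc (|T.c| * r ^ T.L.length * (r ^ T.m)⁻¹)
              * (C₁ * (h/32)^T.k * A T.k * g₀ r * J ^ (-(ρ * (T.k:ℝ))))
              = (|T.c| * (h/32)^T.k * A T.k * (C₁ * g₀ r))
                * (r ^ T.L.length * (r ^ T.m)⁻¹ * J ^ (-(ρ * (T.k:ℝ)))) := by ring
            _ ≤ (|T.c| * (h/32)^T.k * A T.k * (C₁ * g₀ r))
                * (K^(n - T.k) * J ^ (-(ρ * (n:ℝ)))) :=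
                mul_le_mul_of_nonneg_left hj hnn
            _ = (|T.c| * u T.k) * (C₁ * g₀ r * J ^ (-(ρ * (n:ℝ)))) := by
                rw [hu]; ring
  have hsum1 : ‖((Tms l).map fun T => val b₀ T x).sum‖
      ≤ ((Tms l).map fun T => |T.c| * u T.k).sum * (C₁ * g₀ r * J ^ (-(ρ * (n:ℝ)))) := by
    calc ‖((Tms l).map fun T => val b₀ T x).sum‖
        ≤ ((Tms l).map fun T => ‖val b₀ T x‖).sum := norm_list_sum_le _ _
      _ ≤ ((Tms l).map fun T =>
            (|T.c| * u T.k) * (C₁ * g₀ r * J ^ (-(ρ * (n:ℝ))))).sum :=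
          List.sum_le_sum hterm
      _ = _ := sum_map_mul_right _ _ _
  have hmass : ((Tms l).map fun T => |T.c| * u T.k).sum
      = ∑ k ∈ Finset.range (n+1), mass k (Tms l) * u k :=
    sum_eq_mass_sum n (Tms l) (fun T hT => (Tms_inv l T hT).2.1) u
  have hper : ∀ k ∈ Finset.range (n+1), mass k (Tms l) * u k ≤ CL * (h/4)^n * A n := by
    intro k hk
    rw [Finset.mem_range] at hk
    have hkn : k ≤ n := by omega
    have hmb := massBound l k
    rw [← hn] at hmb
    have hfk : (0:ℝ) < (Nat.factorial k : ℝ) := by exact_mod_cast Nat.factorial_pos k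
    have hchoose : ((n.choose k : ℕ) : ℝ) ≤ 2^n := by
      have h1 : n.choose k ≤ 2^n :=
        calc n.choose k ≤ ∑ m ∈ Finset.range (n+1), n.choose m :=
              Finset.single_le_sum (fun i _ => Nat.zero_le _)
                (Finset.mem_range.mpr (by omega))
          _ = 2 ^ n := Nat.sum_range_choose n
      exact_mod_cast h1
    have hfactsplit : ((Nat.factorial n : ℕ):ℝ)
        = (n.choose k : ℝ) * (Nat.factorial k : ℝ) * (Nat.factorial (n-k) : ℝ) := by
      exact_mod_cast (Nat.choose_mul_factorial_mul_factorial hkn).symm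
    have hnk : (Nat.factorial (n-k) : ℝ) ≤ CL * (h/(32*K))^(n-k) * A (n-k) := hfacL (n-k)
    have hAA : A k * A (n-k) ≤ A n := by
      have h1 := A_mul_le A hApos hA0 hlc k (n-k)
      rwa [show k + (n-k) = n from by omega] at h1
    have hKpow : (h/(32*K))^(n-k) * K^(n-k) = (h/32)^(n-k) := by
      rw [← mul_pow]
      congr 1
      field_simp
    have hpow32 : (h/32)^(n-k) * (h/32)^k = (h/32)^n := by
      rw [← pow_add]
      congr 1
      omega
    have hu_nonneg : (0:ℝ) ≤ u k :=
      mul_nonneg (mul_nonneg (by positivity) (hApos k).le) (by positivity)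
    have key : (Nat.factorial n : ℝ) * u k
        ≤ (Nat.factorial k : ℝ) * (2^n * CL * (h/32)^n * A n) := by
      rw [hfactsplit]
      have e1 : (n.choose k : ℝ) * (Nat.factorial k : ℝ) * (Nat.factorial (n-k) : ℝ)
          ≤ (2^n * (Nat.factorial k : ℝ)) * (CL * (h/(32*K))^(n-k) * A (n-k)) := by
        apply mul_le_mul (mul_le_mul_of_nonneg_right hchoose hfk.le) hnk
          (by positivity) (by positivity)
      calc (n.choose k : ℝ) * (Nat.factorial k : ℝ) * (Nat.factorial (n-k) : ℝ) * u k
          ≤ ((2^n * (Nat.factorial k : ℝ)) * (CL * (h/(32*K))^(n-k) * A (n-k))) * u k :=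
            mul_le_mul_of_nonneg_right e1 hu_nonneg
        _ = (Nat.factorial k : ℝ) * (2^n * CL * ((h/(32*K))^(n-k) * K^(n-k))
            * ((h/32)^k * (A k * A (n-k)))) := by rw [hu]; ring
        _ ≤ (Nat.factorial k : ℝ) * (2^n * CL * (h/32)^(n-k) * ((h/32)^k * A n)) := by
            rw [hKpow]
            refine mul_le_mul_of_nonneg_left ?_ hfk.le
            have h2 : (h/32)^k * (A k * A (n-k)) ≤ (h/32)^k * A n :=
              mul_le_mul_of_nonneg_left hAA (by positivity)
            have h3 : (0:ℝ) ≤ 2^n * CL * (h/32)^(n-k) := by positivity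
            calc 2^n * CL * (h/32)^(n-k) * ((h/32)^k * (A k * A (n-k)))
                ≤ 2^n * CL * (h/32)^(n-k) * ((h/32)^k * A n) :=
                  mul_le_mul_of_nonneg_left h2 h3
              _ = _ := rfl
        _ = (Nat.factorial k : ℝ) * (2^n * CL * (h/32)^n * A n) := by
            rw [show (2:ℝ)^n * CL * (h/32)^(n-k) * ((h/32)^k * A n)
              = 2^n * CL * ((h/32)^(n-k) * (h/32)^k) * A n from by ring, hpow32]
    have h6 : mass k (Tms l) * u k * (Nat.factorial k:ℝ)
        ≤ CL * (h/4)^n * A n * (Nat.factorial k:ℝ) := by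
      calc mass k (Tms l) * u k * (Nat.factorial k:ℝ)
          = (mass k (Tms l) * (Nat.factorial k:ℝ)) * u k := by ring
        _ ≤ (4^n * (Nat.factorial n:ℝ)) * u k := mul_le_mul_of_nonneg_right hmb hu_nonneg
        _ = 4^n * ((Nat.factorial n:ℝ) * u k) := by ring
        _ ≤ 4^n * ((Nat.factorial k:ℝ) * (2^n * CL * (h/32)^n * A n)) :=
            mul_le_mul_of_nonneg_left key (by positivity)
        _ = (4^n * 2^n * (h/32)^n) * CL * A n * (Nat.factorial k:ℝ) := by ring
        _ = CL * (h/4)^n * A n * (Nat.factorial k:ℝ) := by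
            rw [show (4:ℝ)^n * 2^n * (h/32)^n = (h/4)^n from by
              rw [← mul_pow, ← mul_pow]; congr 1; ring]
            ring
    exact le_of_mul_le_mul_right h6 hfk
  have hAn0 : (0:ℝ) ≤ A n := (hApos n).le
  have htot : ∑ k ∈ Finset.range (n+1), mass k (Tms l) * u k ≤ CL * h^n * A n := by
    have hconst : (0:ℝ) ≤ CL * (h/4)^n * A n :=
      mul_nonneg (mul_nonneg hCL.le (by positivity)) hAn0
    calc ∑ k ∈ Finset.range (n+1), mass k (Tms l) * u k
        ≤ ∑ _k ∈ Finset.range (n+1), CL * (h/4)^n * A n := Finset.sum_le_sum hper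
      _ = ((n:ℝ)+1) * (CL * (h/4)^n * A n) := by
          rw [Finset.sum_const, Finset.card_range, nsmul_eq_mul]
          push_cast
          ring
      _ ≤ (2:ℝ)^n * (CL * (h/4)^n * A n) := by
          refine mul_le_mul_of_nonneg_right ?_ hconst
          have h1 : n + 1 ≤ 2^n := Nat.lt_two_pow_self
          exact_mod_cast h1
      _ = CL * ((2:ℝ)^n * (h/4)^n) * A n := by ring
      _ ≤ CL * h^n * A n := by
          rw [show (2:ℝ)^n * (h/4)^n = (h/2)^n from by rw [← mul_pow]; congr 1; ring]
          refine mul_le_mul_of_nonneg_right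
            (mul_le_mul_of_nonneg_left (pow_le_pow_left₀ (by positivity) (by linarith) n)
              hCL.le) hAn0
  calc ‖((Tms l).map fun T => val b₀ T x).sum‖
      ≤ ((Tms l).map fun T => |T.c| * u T.k).sum * (C₁ * g₀ r * J ^ (-(ρ * (n:ℝ)))) := hsum1
    _ ≤ (CL * h^n * A n) * (C₁ * g₀ r * J ^ (-(ρ * (n:ℝ)))) := by
        rw [hmass]
        exact mul_le_mul_of_nonneg_right htot hfac_outer
    _ = C₁ * CL * h ^ n * A n * g₀ r / J ^ (ρ * (n:ℝ)) := by
        rw [Real.rpow_neg hJ0.le]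
        ring

lemma univ_toList_map_sum {ι : Type*} [Fintype ι] (f : ι → ℕ) :
    (Finset.univ.toList.map f).sum = ∑ i, f i := by
  simp [Finset.sum_eq_multiset_sum, ← Multiset.sum_toList]

end Stmt12Aux

/-- radial functions built from symbols of one variable keep the symbol
estimates. -/
theorem stmt12 {d : ℕ} (hd : 1 ≤ d) (ρ s : ℝ) (hρ0 : 0 < ρ) (hρ1 : ρ ≤ 1) (hs : 0 < s)
    (A : ℕ → ℝ) (hApos : ∀ k, 0 < A k) (hA0 : A 0 = 1)
    (hlc : ∀ k : ℕ, 1 ≤ k → A k ^ 2 ≤ A (k - 1) * A (k + 1))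
    (hfac : ∀ L : ℝ, 0 < L → ∃ C_L : ℝ, 0 < C_L ∧
      ∀ k : ℕ, (Nat.factorial k : ℝ) ≤ C_L * L ^ k * A k)
    (g₀ : ℝ → ℝ) (hg₀c : ContinuousOn g₀ (Set.Ioi (0 : ℝ))) (hg₀pos : ∀ t, 0 < t → 0 < g₀ t)
    (b₀ : ℝ → ℂ) (hb₀ : ContDiffOn ℝ (⊤ : ℕ∞) b₀ (Set.Ioi s))
    (hb₀der : ∀ h : ℝ, 0 < h → ∃ C : ℝ, 0 < C ∧ ∀ t : ℝ, s < t → ∀ k : ℕ,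
      ‖iteratedDeriv k b₀ t‖ ≤
        C * h ^ k * A k * g₀ t / Real.sqrt (1 + t ^ 2) ^ (ρ * (k : ℝ))) :
    ContDiffOn ℝ (⊤ : ℕ∞) (fun x : EuclideanSpace ℝ (Fin d) => b₀ ‖x‖) {x | s < ‖x‖} ∧
    ∀ h : ℝ, 0 < h → ∃ C : ℝ, 0 < C ∧ ∀ x : EuclideanSpace ℝ (Fin d), s < ‖x‖ →
      ∀ α : Fin d → ℕ,
        ‖mderiv α (fun y => b₀ ‖y‖) x‖ ≤
          C * h ^ mdeg α * A (mdeg α) * g₀ ‖x‖ / jap x ^ (ρ * (mdeg α : ℝ)) := by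
  constructor
  · intro x hx
    have hx0 : x ≠ 0 := norm_pos_iff.mp (lt_trans hs hx)
    have h1 : ContDiffAt ℝ (⊤ : ℕ∞) b₀ ‖x‖ := hb₀.contDiffAt (isOpen_Ioi.mem_nhds hx)
    have h2 : ContDiffAt ℝ (⊤ : ℕ∞) (fun y : EuclideanSpace ℝ (Fin d) => ‖y‖) x :=
      contDiffAt_norm ℝ hx0
    exact (h1.comp x h2).contDiffWithinAt
  · intro h hh
    obtain ⟨C, hC, hbound⟩ :=
      Stmt12Aux.main_bound hρ0 hρ1 hs hApos hA0 hlc hfac hg₀pos hb₀ hb₀der h hh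
    refine ⟨C, hC, ?_⟩
    intro x hx α
    have hlen : (Finset.univ.toList.flatMap fun i => List.replicate (α i) i).length
        = mdeg α := by
      rw [List.length_flatMap]
      have : (List.length ∘ fun i : Fin d => List.replicate (α i) i) = fun i => α i := by
        funext i; simp
      rw [show (fun a : Fin d => (List.replicate (α a) a).length) = fun i => α i from this,
        Stmt12Aux.univ_toList_map_sum]
      rfl
    have hb2 := hbound x hx (Finset.univ.toList.flatMap fun i => List.replicate (α i) i)
    rw [hlen] at hb2
    exact hb2
end
end

section
/- Let $d\ge1$. For every $x\in\mathbb{R}^{d}\setminus\{0\}$ and every multi-index $\alpha\in\mathbb{N}^{d}$, the Euclidean norm function satisfies $\big|\partial^{\alpha}|x|\big|\le(3d)^{|\alpha|+1}\,\alpha!\,|x|^{1-|\alpha|}$. -/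
open scoped BigOperators

noncomputable section

/-!
Away from the origin, `∂_{i₁} ⋯ ∂_{iₙ} ‖x‖` is a finite sum of terms `c x^e ‖x‖^(1 - n - |e|)`
with `|e| ≤ n`. Differentiating such a term in `xᵢ` gives
`c eᵢ x^(e - δᵢ) ‖x‖^(1 - n - |e|) + c (1 - n - |e|) x^(e + δᵢ) ‖x‖^(-1 - n - |e|)`,
whose coefficients have total size at most `3 (n + 1) |c|`; hence the coefficients of an
`n`-th derivative have total size at most `3ⁿ n!`. As `|x^e| ≤ ‖x‖^|e|`, every term is bounded by
`|c| ‖x‖^(1 - n)`, and the multinomial bound `|α|! ≤ d^|α| α!` turns `3^|α| |α|!` into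
`(3d)^|α| α!`.
-/

open Finset Function

section Calculus

variable {F : Type*} [NormedAddCommGroup F] [InnerProductSpace ℝ F] {x : F}

theorem hasFDerivAt_norm_of_ne_zero (hx : x ≠ 0) :
    HasFDerivAt (‖·‖) (‖x‖⁻¹ • innerSL ℝ x) x := by
  have hsqrt := (Real.hasDerivAt_sqrt (pow_pos (norm_pos_iff.2 hx) 2).ne').comp_hasFDerivAt x
    (hasStrictFDerivAt_norm_sq x).hasFDerivAt
  simp only [comp_def, Real.sqrt_sq (norm_nonneg _)] at hsqrt
  rwa [← Nat.cast_smul_eq_nsmul ℝ, smul_smul, Nat.cast_ofNat,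
    show 1 / (2 * ‖x‖) * 2 = ‖x‖⁻¹ by field_simp] at hsqrt

theorem hasFDerivAt_norm_zpow (m : ℤ) (hx : x ≠ 0) :
    HasFDerivAt (fun y : F => ‖y‖ ^ m) ((m * ‖x‖ ^ (m - 2)) • innerSL ℝ x) x := by
  have hnx : ‖x‖ ≠ 0 := norm_ne_zero_iff.2 hx
  have h := (hasDerivAt_zpow m ‖x‖ (Or.inl hnx)).comp_hasFDerivAt x
    (hasFDerivAt_norm_of_ne_zero hx)
  rwa [smul_smul, mul_assoc, ← zpow_neg_one, ← zpow_add₀ hnx,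
    show m - 1 + -1 = m - 2 by ring] at h

end Calculus

section Monomial

variable {ι : Type*} [Fintype ι]

theorem le_mdeg (e : ι → ℕ) (i : ι) : e i ≤ mdeg e :=
  single_le_sum (fun j _ => Nat.zero_le (e j)) (mem_univ i)

variable [DecidableEq ι]

theorem prod_pow_update {M : Type*} [CommMonoid M] (x : ι → M) (e : ι → ℕ) (i : ι) (b : ℕ) :
    ∏ j, x j ^ update e i b j = x i ^ b * ∏ j ∈ univ.erase i, x j ^ e j := by
  rw [← mul_prod_erase univ _ (mem_univ i), update_self]
  congr 1
  exact prod_congr rfl fun j hj => by rw [update_of_ne (ne_of_mem_erase hj)]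

theorem mdeg_update (e : ι → ℕ) (i : ι) (b : ℕ) :
    (mdeg (update e i b) : ℤ) = mdeg e - e i + b := by
  simp only [mdeg, sum_update_of_mem (mem_univ i), ← add_sum_erase univ e (mem_univ i),
    sdiff_singleton_eq_erase]
  push_cast
  ring

theorem hasFDerivAt_prod_pow (e : ι → ℕ) (x : EuclideanSpace ℝ ι) :
    HasFDerivAt (fun y : EuclideanSpace ℝ ι => ∏ j, y j ^ e j)
      (∑ j, (∏ k ∈ univ.erase j, x k ^ e k) •
        ((e j * x j ^ (e j - 1)) • EuclideanSpace.proj (𝕜 := ℝ) j)) x :=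
  HasFDerivAt.finsetProd fun j _ =>
    (hasDerivAt_pow (e j) (x j)).comp_hasFDerivAt x (EuclideanSpace.proj (𝕜 := ℝ) j).hasFDerivAt

theorem pd_prod_pow (e : ι → ℕ) (i : ι) (x : EuclideanSpace ℝ ι) :
    pd i (fun y : EuclideanSpace ℝ ι => ∏ j, y j ^ e j) x
      = e i * ∏ j, x j ^ update e i (e i - 1) j := by
  simp [pd, (hasFDerivAt_prod_pow e x).fderiv, prod_pow_update]
  ring

end Monomial

structure NormTerm (ι : Type*) where
  coeff : ℝ
  exps : ι → ℕ

namespace NormTerm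

variable {ι : Type*} [Fintype ι]

def eval (m : ℤ) (t : NormTerm ι) (x : EuclideanSpace ℝ ι) : ℝ :=
  t.coeff * (∏ j, x j ^ t.exps j) * ‖x‖ ^ (m - mdeg t.exps)

def evalSum (m : ℤ) (L : List (NormTerm ι)) (x : EuclideanSpace ℝ ι) : ℝ :=
  (L.map fun t => t.eval m x).sum

def absCoeffSum (L : List (NormTerm ι)) : ℝ :=
  (L.map fun t => |t.coeff|).sum

@[simp] theorem evalSum_nil (m : ℤ) : evalSum m ([] : List (NormTerm ι)) = 0 := rfl

@[simp] theorem evalSum_cons (m : ℤ) (t : NormTerm ι) (L : List (NormTerm ι)) :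
    evalSum m (t :: L) = t.eval m + evalSum m L := rfl

theorem evalSum_append (m : ℤ) (L L' : List (NormTerm ι)) :
    evalSum m (L ++ L') = evalSum m L + evalSum m L' := by
  ext x
  simp [evalSum]

theorem abs_eval_le (m : ℤ) (t : NormTerm ι) {x : EuclideanSpace ℝ ι} (hx : x ≠ 0) :
    |t.eval m x| ≤ |t.coeff| * ‖x‖ ^ m := by
  have hpos : 0 < ‖x‖ := norm_pos_iff.2 hx
  have hmono : |∏ j, x j ^ t.exps j| ≤ ‖x‖ ^ mdeg t.exps := by
    rw [abs_prod, mdeg, ← prod_pow_eq_pow_sum]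
    gcongr with j
    rw [abs_pow, ← Real.norm_eq_abs]
    exact pow_le_pow_left₀ (norm_nonneg _) (PiLp.norm_apply_le x j) _
  calc |t.eval m x| = |t.coeff| * |∏ j, x j ^ t.exps j| * ‖x‖ ^ (m - mdeg t.exps) := by
        rw [eval, abs_mul, abs_mul, abs_of_pos (zpow_pos hpos _)]
    _ ≤ |t.coeff| * ‖x‖ ^ mdeg t.exps * ‖x‖ ^ (m - mdeg t.exps) := by gcongr
    _ = |t.coeff| * ‖x‖ ^ m := by
        rw [mul_assoc, ← zpow_natCast, ← zpow_add₀ hpos.ne', add_sub_cancel]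

theorem abs_evalSum_le (m : ℤ) (L : List (NormTerm ι)) {x : EuclideanSpace ℝ ι} (hx : x ≠ 0) :
    |evalSum m L x| ≤ absCoeffSum L * ‖x‖ ^ m := by
  induction L with
  | nil => simp [absCoeffSum]
  | cons t L ih =>
    calc |evalSum m (t :: L) x| ≤ |t.eval m x| + |evalSum m L x| := abs_add_le _ _
      _ ≤ |t.coeff| * ‖x‖ ^ m + absCoeffSum L * ‖x‖ ^ m := add_le_add (t.abs_eval_le m hx) ih
      _ = absCoeffSum (t :: L) * ‖x‖ ^ m := by simp [absCoeffSum, add_mul]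

theorem differentiableAt_eval (m : ℤ) (t : NormTerm ι) {x : EuclideanSpace ℝ ι} (hx : x ≠ 0) :
    DifferentiableAt ℝ (t.eval m) x := by
  have hmono : DifferentiableAt ℝ (fun y : EuclideanSpace ℝ ι => ∏ j, y j ^ t.exps j) x := by
    fun_prop
  exact (hmono.const_mul t.coeff).mul (hasFDerivAt_norm_zpow _ hx).differentiableAt

theorem differentiableAt_evalSum (m : ℤ) (L : List (NormTerm ι)) {x : EuclideanSpace ℝ ι}
    (hx : x ≠ 0) : DifferentiableAt ℝ (evalSum m L) x := by
  induction L with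
  | nil => exact differentiableAt_const 0
  | cons t L ih => exact (t.differentiableAt_eval m hx).add ih

variable [DecidableEq ι]

-- The product rule on `c x^e ‖x‖^(m - |e|)`. When `e i = 0` the first term has the junk exponent
-- `e i - 1 = 0` but coefficient `0`.
def pderiv (m : ℤ) (i : ι) (t : NormTerm ι) : List (NormTerm ι) :=
  [⟨t.coeff * t.exps i, update t.exps i (t.exps i - 1)⟩,
    ⟨t.coeff * (m - mdeg t.exps), update t.exps i (t.exps i + 1)⟩]

theorem absCoeffSum_pderiv (m : ℤ) (i : ι) (t : NormTerm ι) :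
    absCoeffSum (t.pderiv m i) = |t.coeff| * (t.exps i + |(m : ℝ) - mdeg t.exps|) := by
  simp only [absCoeffSum, pderiv, List.map_cons, abs_mul, Nat.abs_cast, List.map_nil,
    List.sum_cons, List.sum_nil, add_zero]
  ring

theorem pd_eval (m : ℤ) (i : ι) (t : NormTerm ι) {x : EuclideanSpace ℝ ι} (hx : x ≠ 0) :
    pd i (t.eval m) x = evalSum (m - 1) (t.pderiv m i) x := by
  obtain ⟨c, e⟩ := t
  have hlower : (e i : ℝ) * (∏ j, x j ^ update e i (e i - 1) j)
        * ‖x‖ ^ (m - 1 - mdeg (update e i (e i - 1)))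
      = e i * (∏ j, x j ^ update e i (e i - 1) j) * ‖x‖ ^ (m - mdeg e) := by
    rcases Nat.eq_zero_or_pos (e i) with he | he
    · simp [he]
    · rw [mdeg_update, Nat.cast_sub he]
      ring_nf
  have hraise : (∏ j, x j ^ update e i (e i + 1) j) * ‖x‖ ^ (m - 1 - mdeg (update e i (e i + 1)))
      = x i * (∏ j, x j ^ e j) * ‖x‖ ^ (m - mdeg e - 2) := by
    rw [mdeg_update, prod_pow_update, ← mul_prod_erase univ _ (mem_univ i)]
    push_cast
    ring_nf
  have hmono : HasFDerivAt (fun y : EuclideanSpace ℝ ι => ∏ j, y j ^ e j)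
      (fderiv ℝ (fun y : EuclideanSpace ℝ ι => ∏ j, y j ^ e j) x) x :=
    (hasFDerivAt_prod_pow e x).differentiableAt.hasFDerivAt
  have hP := (hmono.const_mul c).mul (hasFDerivAt_norm_zpow (m - mdeg e) hx)
  rw [pd, show eval m ⟨c, e⟩ = (fun y => c * ∏ j, y j ^ e j) * fun y => ‖y‖ ^ (m - mdeg e)
    from rfl, hP.fderiv]
  have hmono_i := pd_prod_pow e i x
  simp only [pd] at hmono_i
  simp only [Int.cast_sub, Int.cast_natCast, add_apply, smul_apply, coe_innerSL_apply,
    EuclideanSpace.inner_single_right, Real.ringHom_apply, one_mul, smul_eq_mul, hmono_i, evalSum,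
    eval, pderiv, List.map_cons, List.map_nil, List.sum_cons, List.sum_nil, add_zero]
  linear_combination (-c) * hlower - c * ((m : ℝ) - mdeg e) * hraise

theorem pd_evalSum (m : ℤ) (i : ι) (L : List (NormTerm ι)) {x : EuclideanSpace ℝ ι}
    (hx : x ≠ 0) : pd i (evalSum m L) x = evalSum (m - 1) (L.flatMap (pderiv m i)) x := by
  induction L with
  | nil => simp [pd]
  | cons t L ih =>
    rw [List.flatMap_cons, evalSum_append, Pi.add_apply, ← ih, ← pd_eval m i t hx, evalSum_cons]
    simp only [pd]
    rw [fderiv_add (t.differentiableAt_eval m hx) (differentiableAt_evalSum m L hx)]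
    rfl

theorem absCoeffSum_flatMap_pderiv (m : ℤ) (i : ι) (L : List (NormTerm ι)) :
    absCoeffSum (L.flatMap (pderiv m i)) = (L.map fun t => absCoeffSum (t.pderiv m i)).sum := by
  induction L with
  | nil => rfl
  | cons t L ih =>
    simp only [absCoeffSum, List.flatMap_cons, List.map_append, List.sum_append, List.map_cons,
      List.sum_cons, add_right_inj] at ih ⊢
    rw [ih]

end NormTerm

section NormDerivatives

open NormTerm Filter Topology

variable {ι : Type*} [Fintype ι] [DecidableEq ι]

def normDerivTerms : List ι → List (NormTerm ι)
  | [] => [⟨1, 0⟩]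
  | i :: l => (normDerivTerms l).flatMap (pderiv (1 - l.length) i)

theorem listDeriv_norm (l : List ι) {x : EuclideanSpace ℝ ι} (hx : x ≠ 0) :
    listDeriv l (‖·‖) x = evalSum (1 - l.length) (normDerivTerms l) x := by
  induction l generalizing x with
  | nil => simp [listDeriv, normDerivTerms, NormTerm.eval, mdeg]
  | cons i l ih =>
    have hloc : listDeriv l (‖·‖) =ᶠ[𝓝 x] evalSum (1 - l.length) (normDerivTerms l) :=
      eventually_of_mem (isOpen_ne.mem_nhds hx) fun y hy => ih hy
    rw [listDeriv, pd, hloc.fderiv_eq, ← pd, pd_evalSum _ _ _ hx, normDerivTerms,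
      List.length_cons]
    congr 1
    push_cast
    ring

theorem mdeg_le_of_mem_normDerivTerms {l : List ι} {t : NormTerm ι}
    (ht : t ∈ normDerivTerms l) : mdeg t.exps ≤ l.length := by
  induction l generalizing t with
  | nil => simp_all [normDerivTerms, mdeg]
  | cons i l ih =>
    obtain ⟨s, hs, hts⟩ := List.mem_flatMap.1 ht
    have hdeg := ih hs
    have hi := le_mdeg s.exps i
    simp only [pderiv, List.mem_cons, List.not_mem_nil, or_false] at hts
    rcases hts with rfl | rfl
    · have hupd := mdeg_update s.exps i (s.exps i - 1)
      simp only [List.length_cons]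
      omega
    · have hupd := mdeg_update s.exps i (s.exps i + 1)
      simp only [List.length_cons]
      omega

theorem absCoeffSum_pderiv_le {n : ℕ} (i : ι) {t : NormTerm ι} (ht : mdeg t.exps ≤ n) :
    absCoeffSum (t.pderiv (1 - n) i) ≤ 3 * (n + 1) * |t.coeff| := by
  have hi : (t.exps i : ℝ) ≤ n := by exact_mod_cast (le_mdeg t.exps i).trans ht
  have hdeg : (mdeg t.exps : ℝ) ≤ n := by exact_mod_cast ht
  have hexp : |((1 - n : ℤ) : ℝ) - mdeg t.exps| ≤ 2 * n + 1 := by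
    rw [abs_le]; push_cast; constructor <;> linarith [(mdeg t.exps).cast_nonneg (α := ℝ)]
  rw [absCoeffSum_pderiv, mul_comm]
  gcongr
  linarith

theorem absCoeffSum_normDerivTerms_le (l : List ι) :
    absCoeffSum (normDerivTerms l) ≤ 3 ^ l.length * Nat.factorial l.length := by
  induction l with
  | nil => simp [normDerivTerms, absCoeffSum]
  | cons i l ih =>
    calc absCoeffSum (normDerivTerms (i :: l))
        = ((normDerivTerms l).map fun t => absCoeffSum (t.pderiv (1 - l.length) i)).sum :=
          absCoeffSum_flatMap_pderiv _ _ _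
      _ ≤ ((normDerivTerms l).map fun t => 3 * ((l.length : ℝ) + 1) * |t.coeff|).sum :=
          List.sum_le_sum fun t ht => absCoeffSum_pderiv_le i (mdeg_le_of_mem_normDerivTerms ht)
      _ = 3 * (l.length + 1) * absCoeffSum (normDerivTerms l) := List.sum_map_mul_left _ _ _
      _ ≤ 3 * (l.length + 1) * (3 ^ l.length * Nat.factorial l.length) := by gcongr
      _ = 3 ^ (i :: l).length * Nat.factorial (i :: l).length := by
          simp only [List.length_cons, Nat.factorial_succ]
          push_cast
          ring

theorem abs_listDeriv_norm_le (l : List ι) {x : EuclideanSpace ℝ ι} (hx : x ≠ 0) :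
    |listDeriv l (‖·‖) x| ≤ 3 ^ l.length * Nat.factorial l.length * ‖x‖ ^ (1 - l.length : ℤ) := by
  rw [listDeriv_norm l hx]
  exact (abs_evalSum_le _ _ hx).trans (by gcongr; exact absCoeffSum_normDerivTerms_le l)

end NormDerivatives

theorem factorial_mdeg_le {ι : Type*} [Fintype ι] [DecidableEq ι] (α : ι → ℕ) :
    Nat.factorial (mdeg α) ≤ Fintype.card ι ^ mdeg α * mfact α := by
  have hmultinomial : Nat.multinomial univ α ≤ Fintype.card ι ^ mdeg α := by
    have h := sum_pow_eq_sum_piAntidiag (univ : Finset ι) (fun _ => (1 : ℕ)) (mdeg α)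
    simp only [sum_const, card_univ, smul_eq_mul, mul_one, one_pow, prod_const_one] at h
    rw [h]
    exact single_le_sum (fun k _ => Nat.zero_le _) (by simp [mdeg])
  calc Nat.factorial (mdeg α) = mfact α * Nat.multinomial univ α := (Nat.multinomial_spec _ _).symm
    _ ≤ Fintype.card ι ^ mdeg α * mfact α := by rw [mul_comm]; gcongr

theorem length_flatMap_replicate {ι : Type*} [Fintype ι] (α : ι → ℕ) :
    (univ.toList.flatMap fun i => List.replicate (α i) i).length = mdeg α := by
  simp [List.length_flatMap, mdeg, sum_map_toList]

/-- derivative bounds for the Euclidean norm away from the origin. -/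
theorem stmt13 {d : ℕ} (hd : 1 ≤ d) :
    ∀ x : EuclideanSpace ℝ (Fin d), x ≠ 0 → ∀ α : Fin d → ℕ,
      |mderiv α (fun y => ‖y‖) x| ≤
        ((3 * d : ℕ) : ℝ) ^ (mdeg α + 1) * (mfact α : ℝ) * ‖x‖ ^ ((1 : ℝ) - (mdeg α : ℝ)) := by
  intro x hx α
  have hconst : 3 ^ mdeg α * Nat.factorial (mdeg α) ≤ (3 * d) ^ (mdeg α + 1) * mfact α :=
    calc 3 ^ mdeg α * Nat.factorial (mdeg α) ≤ 3 ^ mdeg α * (d ^ mdeg α * mfact α) := by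
          gcongr; simpa using factorial_mdeg_le α
      _ = (3 * d) ^ mdeg α * mfact α := by ring
      _ ≤ (3 * d) ^ (mdeg α + 1) * mfact α := by gcongr <;> omega
  have hbound := abs_listDeriv_norm_le (univ.toList.flatMap fun i => List.replicate (α i) i) hx
  rw [length_flatMap_replicate] at hbound
  rw [mderiv, show (1 : ℝ) - mdeg α = ((1 - mdeg α : ℤ) : ℝ) by push_cast; ring, Real.rpow_intCast]
  refine hbound.trans (mul_le_mul_of_nonneg_right ?_ (by positivity))
  exact_mod_cast hconst
end
end
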